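/- arXiv:1504.04931 — 6 statements merged into one kernel-verified Lean document; each statement's English description precedes it below -/
import Mathlib

section
/- Let G be a 2-vertex-connected undirected graph and let e be an edge of G with endpoints t1 and t2. Then for every two distinct vertices u and v of G there exist two vertex-disjoint paths (possibly of length zero) from u to t1 and from v to t2 (or from u to t2 and v to t1), i.e., two paths sharing no vertices, connecting {u,v} to the two endpoints of e. -/
open SimpleGraph

/-- A cycle in `G`: a (finite) connected `2`-regular subgraph. -/
def IsCycleSubgraph {V : Type*} {G : SimpleGraph V} (C : G.Subgraph) : Prop :=
  C.verts.Finite ∧ C.Connected ∧ ∀ v ∈ C.verts, (C.neighborSet v).ncard = 2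

open Classical in
/-- The characteristic vector over `𝔽₂` of the edge set of a subgraph. -/
noncomputable def edgeVec {V : Type*} {G : SimpleGraph V} (C : G.Subgraph) :
    Sym2 V → ZMod 2 :=
  fun e => if e ∈ C.edgeSet then 1 else 0

/-- The cycle space of `G`: the `𝔽₂`-span of the edge vectors of cycles of `G`. -/
noncomputable def cycleSpace {V : Type*} (G : SimpleGraph V) :
    Submodule (ZMod 2) (Sym2 V → ZMod 2) :=
  Submodule.span (ZMod 2) (edgeVec '' {C : G.Subgraph | IsCycleSubgraph C})

/-- A cycle basis of `G`: a set of cycles whose edge vectors form a basis of the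
cycle space of `G`. -/
def IsCycleBasis {V : Type*} {G : SimpleGraph V} (B : Set G.Subgraph) : Prop :=
  (∀ C ∈ B, IsCycleSubgraph C) ∧
  LinearIndependent (ZMod 2) (fun C : B => edgeVec C.1) ∧
  Submodule.span (ZMod 2) (edgeVec '' B) = cycleSpace G

/-- A graph is `2`-vertex-connected if it has at least three vertices and deleting
any single vertex leaves it connected. -/
def TwoConnected {V : Type*} (G : SimpleGraph V) : Prop :=
  3 ≤ Nat.card V ∧ ∀ v : V, (G.induce ({v}ᶜ : Set V)).Connected

/-!
Fix `u` and induct along a walk `v = v₀, v₁, …, vₙ = x` towards the target `{x, y}`. If `v`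
is itself a target, `u` reaches the other one inside the connected graph `G - v`. Otherwise,
given disjoint paths `p : u → x'` and `q : v₁ → y'` with `{x', y'} = {x, y}`, the vertex `v`
either lies on `q` (cut `q` at `v`), or off both paths (prepend the edge `v v₁` to `q`), or
on `p`. In the last case let `s` be the tail of `p` from `v`, and follow a path from `u` to `x'`
avoiding `v` (it exists because `G - v` is connected) until it first meets `s ∪ q`: if it
meets `s`, then `u` continues along `s` and `v` takes the edge to `v₁` and then `q`; if it
meets `q`, then `u` continues along `q` and `v` keeps `s`.
-/

namespace SimpleGraph

variable {V : Type*} {G : SimpleGraph V} {u v w x y : V}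

theorem Walk.IsPath.append {p : G.Walk u v} {q : G.Walk v w} (hp : p.IsPath) (hq : q.IsPath)
    (h : ∀ z ∈ p.support, z ∈ q.support → z = v) : (p.append q).IsPath := by
  rw [Walk.isPath_def, Walk.support_append]
  have hq' := hq.support_nodup
  rw [← q.cons_tail_support, List.nodup_cons] at hq'
  refine hp.support_nodup.append hq'.2 fun z hzp hzq => ?_
  obtain rfl := h z hzp (List.mem_of_mem_tail hzq)
  exact hq'.1 hzq

theorem exists_isPath_notMem_support {c : V} (hc : (G.induce ({c}ᶜ : Set V)).Connected)
    (hu : u ≠ c) (hv : v ≠ c) : ∃ p : G.Walk u v, p.IsPath ∧ c ∉ p.support := by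
  classical
  obtain ⟨W⟩ := hc ⟨u, hu⟩ ⟨v, hv⟩
  let p : G.Walk u v := W.map (Embedding.induce _).toHom
  refine ⟨p.bypass, p.bypass_isPath, fun hc => ?_⟩
  have hcW : c ∈ (W.map (Embedding.induce _).toHom).support := p.support_bypass_subset_support hc
  rw [Walk.support_map] at hcW
  simp at hcW

variable (G) in
def DisjointPaths (u v x y : V) : Prop :=
  ∃ (p : G.Walk u x) (q : G.Walk v y), p.IsPath ∧ q.IsPath ∧ p.support.Disjoint q.support

theorem DisjointPaths.symm (h : G.DisjointPaths u v x y) : G.DisjointPaths v u y x :=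
  let ⟨p, q, hp, hq, hpq⟩ := h
  ⟨q, p, hq, hp, hpq.symm⟩

theorem disjointPaths_nil_right {c : V} (hc : (G.induce ({c}ᶜ : Set V)).Connected)
    (hu : u ≠ c) (hx : x ≠ c) : G.DisjointPaths u c x c := by
  obtain ⟨p, hp, hcp⟩ := exists_isPath_notMem_support hc hu hx
  exact ⟨p, .nil, hp, .nil, fun z hz hzc => hcp (by simp_all)⟩

theorem DisjointPaths.append_left {r : V} (R : G.Walk u r) (t : G.Walk r x) (o : G.Walk v y)
    (hR : R.IsPath) (ht : t.IsPath) (ho : o.IsPath)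
    (hRt : ∀ z ∈ R.support, z ∈ t.support → z = r) (hRo : R.support.Disjoint o.support)
    (hto : t.support.Disjoint o.support) : G.DisjointPaths u v x y := by
  refine ⟨R.append t, o, hR.append ht hRt, ho, fun z hz hzo => ?_⟩
  rcases (Walk.mem_support_append_iff R t).mp hz with hzR | hzt
  exacts [hRo hzR hzo, hto hzt hzo]

theorem DisjointPaths.reroute (h : G.DisjointPaths v w x y) (hvw : G.Adj v w)
    (R : G.Walk u x) (hR : R.IsPath) (hvR : v ∉ R.support) :
    G.DisjointPaths u v x y ∨ G.DisjointPaths u v y x := by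
  classical
  obtain ⟨s, q, hs, hq, hsq⟩ := h
  obtain ⟨r, hrS, hrR, hfirst⟩ := R.exists_mem_support_forall_mem_support_imp_eq
    (s.support ++ q.support).toFinset ⟨x, by simp⟩
  set R' := R.takeUntil r hrR
  have hR' : R'.IsPath := hR.takeUntil hrR
  have hvR' : v ∉ R'.support := fun hv => hvR (R.support_takeUntil_subset_support hrR hv)
  have hfirst' : ∀ z ∈ R'.support, z ∈ s.support ∨ z ∈ q.support → z = r :=
    fun z hz hzS => hfirst z (by simpa using hzS) hz
  rcases List.mem_append.mp (List.mem_toFinset.mp hrS) with hrs | hrq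
  · have hvt : v ∉ (s.dropUntil r hrs).support := by
      refine fun hv => (Walk.IsPath.ne_of_mem_support_of_append (p := s.takeUntil r hrs)
        ?_ ?_ (s.takeUntil r hrs).start_mem_support hv) rfl
      · rwa [s.take_spec hrs]
      · rintro rfl; exact hvR' R'.end_mem_support
    have hts : ∀ z ∈ (s.dropUntil r hrs).support, z ∈ s.support :=
      fun z hz => s.support_dropUntil_subset_support hrs hz
    refine .inl <| .append_left R' _ (.cons hvw q) hR' (hs.dropUntil hrs)
      (hq.cons fun hv => hsq s.start_mem_support hv)
      (fun z hz hzt => hfirst' z hz (.inl (hts z hzt))) (fun z hz hzo => ?_)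
      (fun z hzt hzo => ?_)
    · rcases List.mem_cons.mp hzo with rfl | hzq
      · exact hvR' hz
      · obtain rfl := hfirst' z hz (.inr hzq)
        exact hsq hrs hzq
    · rcases List.mem_cons.mp hzo with rfl | hzq
      exacts [hvt hzt, hsq (hts z hzt) hzq]
  · have htq : ∀ z ∈ (q.dropUntil r hrq).support, z ∈ q.support :=
      fun z hz => q.support_dropUntil_subset_support hrq hz
    refine .inr <| .append_left R' _ s hR' (hq.dropUntil hrq) hs
      (fun z hz hzt => hfirst' z hz (.inr (htq z hzt))) (fun z hz hzs => ?_)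
      (fun z hzt hzs => hsq hzs (htq z hzt))
    obtain rfl := hfirst' z hz (.inl hzs)
    exact hsq hzs hrq

theorem DisjointPaths.extend_right (h : G.DisjointPaths u w x y) (hvw : G.Adj v w)
    (R : G.Walk u x) (hR : R.IsPath) (hvR : v ∉ R.support) :
    G.DisjointPaths u v x y ∨ G.DisjointPaths u v y x := by
  classical
  obtain ⟨p, q, hp, hq, hpq⟩ := h
  by_cases hvq : v ∈ q.support
  · exact .inl ⟨p, q.dropUntil v hvq, hp, hq.dropUntil hvq,
      fun z hzp hzq => hpq hzp (q.support_dropUntil_subset_support hvq hzq)⟩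
  by_cases hvp : v ∈ p.support
  · refine DisjointPaths.reroute ⟨p.dropUntil v hvp, q, hp.dropUntil hvp, hq, ?_⟩ hvw R hR hvR
    exact fun z hzs hzq => hpq (p.support_dropUntil_subset_support hvp hzs) hzq
  · refine .inl ⟨p, .cons hvw q, hp, hq.cons hvq, fun z hzp hzq => ?_⟩
    rcases List.mem_cons.mp hzq with rfl | hzq
    exacts [hvp hzp, hpq hzp hzq]

theorem disjointPaths_or_of_walk (hG : ∀ c : V, (G.induce ({c}ᶜ : Set V)).Connected)
    (hxy : x ≠ y) (W : G.Walk v x) (huv : u ≠ v) :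
    G.DisjointPaths u v x y ∨ G.DisjointPaths u v y x := by
  induction W generalizing u with
  | nil => exact .inr (disjointPaths_nil_right (hG _) huv hxy.symm)
  | @cons v w x hvw W ih =>
    by_cases hvy : v = y
    · exact .inl (hvy ▸ disjointPaths_nil_right (hG v) huv (hvy ▸ hxy))
    by_cases hvx : v = x
    · exact .inr (hvx ▸ disjointPaths_nil_right (hG v) huv (hvx ▸ Ne.symm hxy))
    by_cases huw : u = w
    · subst huw
      exact ((ih hxy hvw.ne).imp DisjointPaths.symm DisjointPaths.symm).symm
    rcases ih hxy huw with h | h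
    · obtain ⟨R, hR, hvR⟩ := exists_isPath_notMem_support (hG v) huv (Ne.symm hvx)
      exact h.extend_right hvw R hR hvR
    · obtain ⟨R, hR, hvR⟩ := exists_isPath_notMem_support (hG v) huv (Ne.symm hvy)
      exact (h.extend_right hvw R hR hvR).symm

end SimpleGraph

/-- In a 2-vertex-connected graph `G` with an edge `{t1,t2}`,
every two distinct vertices `u, v` can be joined to the two endpoints of the edge
by two vertex-disjoint paths. -/
theorem stmt0 {V : Type*} (G : SimpleGraph V) (t1 t2 : V) (he : G.Adj t1 t2)
    (hG : TwoConnected G) (u v : V) (huv : u ≠ v) :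
    ∃ (x y : V), ({x, y} : Set V) = {t1, t2} ∧
      ∃ (p : G.Walk u x) (q : G.Walk v y), p.IsPath ∧ q.IsPath ∧
        ∀ w, w ∈ p.support → w ∉ q.support := by
  have hlinked : G.DisjointPaths u v t1 t2 ∨ G.DisjointPaths u v t2 t1 := by
    by_cases hv : v = t2
    · exact .inl (hv ▸ disjointPaths_nil_right (hG.2 v) huv (hv ▸ he.ne))
    obtain ⟨W, -, -⟩ := exists_isPath_notMem_support (hG.2 t2) hv he.ne
    exact disjointPaths_or_of_walk hG.2 he.ne W huv
  rcases hlinked with ⟨p, q, hp, hq, hpq⟩ | ⟨p, q, hp, hq, hpq⟩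
  · exact ⟨t1, t2, rfl, p, q, hp, hq, fun w hw => hpq hw⟩
  · exact ⟨t2, t1, Set.pair_comm _ _, p, q, hp, hq, fun w hw => hpq hw⟩
end

section
/- If an undirected graph G with a designated edge e has a cycle basis in which every basis cycle contains e, then the subgraph of G consisting of all vertices and edges lying on cycles (the 2-core, assuming G equals its 2-core) is 2-vertex-connected. -/
open SimpleGraph

/-!
Suppose `G - v` is disconnected, and let `X` and `Y` be two of its components, `X` containing an
endpoint of the root edge. Every edge of `G` leaving `X` or `Y` ends at `v`, and a cycle has an even
number of edges leaving any vertex set; as `v` has only two neighbours on a cycle, no cycle meets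
both `X` and `Y`. Hence every basis cycle avoids `Y`. But minimum degree two forces a cycle of
`G[Y ∪ {v}]` through a vertex of `Y`, and each of its edges lies on some basis cycle.
-/

namespace SimpleGraph

variable {V : Type*} {G : SimpleGraph V}

lemma three_le_card_of_two_le_ncard_neighborSet [Finite V] (x : V)
    (hx : 2 ≤ (G.neighborSet x).ncard) : 3 ≤ Nat.card V :=
  calc 3 ≤ (insert x (G.neighborSet x)).ncard := by
        rw [Set.ncard_insert_of_notMem G.notMem_neighborSet_self]; omega
    _ ≤ Nat.card V := Set.ncard_le_card _

lemma IsAcyclic.neighborSet_subset_of_forall_length_le (h : G.IsAcyclic) {u w : V}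
    {p : G.Walk u w} (hp : p.IsPath)
    (hmax : ∀ (u' w' : V) (p' : G.Walk u' w'), p'.IsPath → p'.length ≤ p.length) :
    G.neighborSet w ⊆ {p.penultimate} := by
  intro y (hy : G.Adj w y)
  by_cases hys : y ∈ p.support
  · exact h.eq_penultimate_of_adj_end hp hy hys
  · have := hmax _ _ _ (hp.concat hys hy)
    rw [Walk.length_concat] at this
    omega

lemma not_isAcyclic_of_two_le_ncard_neighborSet [Finite V] (x₀ : V)
    (hdeg : ∀ x, x ≠ x₀ → 2 ≤ (G.neighborSet x).ncard) (hne : ∃ x, x ≠ x₀) :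
    ¬ G.IsAcyclic := by
  intro hG
  obtain ⟨x, hx⟩ := hne
  have : Nonempty V := ⟨x⟩
  obtain ⟨u, w, p, hp, hmax⟩ := Walk.exists_isPath_forall_isPath_length_le_length G
  obtain ⟨y, hxy⟩ :=
    Set.nonempty_of_ncard_ne_zero (s := G.neighborSet x) (by have := hdeg x hx; omega)
  have hlen : 1 ≤ p.length := hmax _ _ _ (Walk.IsPath.of_adj hxy)
  have huw : u ≠ w := hp.nil_iff_eq.not.mp (by rw [← Walk.length_eq_zero_iff]; omega)
  have hmax' (u' w' : V) (p' : G.Walk u' w') (hp' : p'.IsPath) :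
      p'.length ≤ p.reverse.length := by
    simpa using hmax u' w' p' hp'
  have hleaf : ∀ a, a = u ∨ a = w → (G.neighborSet a).ncard ≤ 1 := by
    rintro a (rfl | rfl)
    · exact (Set.ncard_le_ncard (hG.neighborSet_subset_of_forall_length_le hp.reverse hmax')).trans
        (Set.ncard_singleton _).le
    · exact (Set.ncard_le_ncard (hG.neighborSet_subset_of_forall_length_le hp hmax)).trans
        (Set.ncard_singleton _).le
  by_cases hu : u = x₀
  · have := hleaf w (.inr rfl); have := hdeg w (by rintro rfl; exact huw hu); omega
  · have := hleaf u (.inl rfl); have := hdeg u hu; omega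

lemma Subgraph.even_ncard_neighborSet_inter [Finite V] {C : G.Subgraph}
    (hC : ∀ x, Even (C.neighborSet x).ncard) {X : Set V} {v : V} (hv : v ∉ X)
    (hX : ∀ x ∈ X, ∀ y, C.Adj x y → y ∈ X ∨ y = v) :
    Even (C.neighborSet v ∩ X).ncard := by
  classical
  have := Fintype.ofFinite V
  set H := (C.induce X).spanningCoe
  have hodd : ∀ x, Odd (H.degree x) ↔ x ∈ C.neighborSet v ∩ X := by
    intro x
    rw [← card_neighborSet_eq_degree, ← Nat.card_eq_fintype_card, Nat.card_coe_set_eq]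
    by_cases hx : x ∈ X
    · have hH : H.neighborSet x = C.neighborSet x \ {v} := by
        ext y
        simp only [H, mem_neighborSet, Set.mem_sdiff, Subgraph.mem_neighborSet,
          Set.mem_singleton_iff]
        constructor
        · rintro ⟨-, hy, hxy⟩
          exact ⟨hxy, fun h => hv (h ▸ hy)⟩
        · rintro ⟨hxy, hyv⟩
          exact ⟨hx, (hX x hx y hxy).resolve_right hyv, hxy⟩
      have hmem : x ∈ C.neighborSet v ∩ X ↔ v ∈ C.neighborSet x := by
        simp [hx, C.adj_comm]
      rw [hH, hmem]
      by_cases hvx : v ∈ C.neighborSet x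
      · have hpos : 0 < (C.neighborSet x).ncard :=
          (Set.ncard_pos (Set.toFinite _)).mpr ⟨v, hvx⟩
        obtain ⟨k, hk⟩ := hC x
        rw [Set.ncard_sdiff_singleton_of_mem hvx, hk]
        exact iff_of_true ⟨k - 1, by omega⟩ hvx
      · simp [Set.sdiff_singleton_eq_self hvx, hvx, hC x]
    · have hH : H.neighborSet x = ∅ := by
        ext y; simp [H, hx]
      simp [hH, hx]
  have key := H.even_card_odd_degree_vertices
  convert key using 2
  rw [Set.ncard_eq_toFinset_card']
  congr 1
  ext x
  simp [hodd]

end SimpleGraph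

section CycleSubgraph

variable {V : Type*} {G : SimpleGraph V} {C : G.Subgraph}

lemma IsCycleSubgraph.even_ncard_neighborSet (hC : IsCycleSubgraph C) (x : V) :
    Even (C.neighborSet x).ncard := by
  by_cases hx : x ∈ C.verts
  · rw [hC.2.2 x hx]; exact even_two
  · have hempty : C.neighborSet x = ∅ :=
      Set.eq_empty_of_forall_notMem fun _ hy => hx (SimpleGraph.Subgraph.Adj.fst_mem hy)
    simp [hempty]

lemma SimpleGraph.Subgraph.Connected.exists_adj_mem_notMem (hC : C.Connected) {X : Set V}
    {x y : V} (hx : x ∈ C.verts) (hxX : x ∈ X) (hy : y ∈ C.verts) (hyX : y ∉ X) :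
    ∃ a b, C.Adj a b ∧ a ∈ X ∧ b ∉ X := by
  obtain ⟨p⟩ := hC.preconnected ⟨x, hx⟩ ⟨y, hy⟩
  obtain ⟨d, -, hd, hd'⟩ := p.exists_boundary_dart (Subtype.val ⁻¹' X) hxX hyX
  exact ⟨d.fst, d.snd, d.adj, hd, hd'⟩

lemma IsCycleSubgraph.neighborSet_subset_of_mem_of_notMem [Finite V] (hC : IsCycleSubgraph C)
    {X : Set V} {v : V} (hv : v ∉ X) (hX : ∀ x ∈ X, ∀ y, C.Adj x y → y ∈ X ∨ y = v)
    {x y : V} (hx : x ∈ C.verts) (hxX : x ∈ X) (hy : y ∈ C.verts) (hyX : y ∉ X) :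
    v ∈ C.verts ∧ C.neighborSet v ⊆ X := by
  obtain ⟨a, b, hab, haX, hbX⟩ := hC.2.1.exists_adj_mem_notMem hx hxX hy hyX
  obtain rfl : b = v := (hX a haX b hab).resolve_left hbX
  have hpos : 0 < (C.neighborSet b ∩ X).ncard :=
    (Set.ncard_pos (Set.toFinite _)).mpr ⟨a, hab.symm, haX⟩
  obtain ⟨k, hk⟩ :=
    SimpleGraph.Subgraph.even_ncard_neighborSet_inter hC.even_ncard_neighborSet hv hX
  have hle : (C.neighborSet b).ncard ≤ (C.neighborSet b ∩ X).ncard := by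
    rw [hC.2.2 b hab.snd_mem]; omega
  refine ⟨hab.snd_mem, ?_⟩
  rw [← Set.eq_of_subset_of_ncard_le Set.inter_subset_left hle]
  exact Set.inter_subset_right

lemma IsCycleSubgraph.notMem_verts_of_disjoint [Finite V] (hC : IsCycleSubgraph C)
    {X Y : Set V} (hXY : Disjoint X Y) {v : V} (hvX : v ∉ X) (hvY : v ∉ Y)
    (hX : ∀ x ∈ X, ∀ y, C.Adj x y → y ∈ X ∨ y = v)
    (hY : ∀ x ∈ Y, ∀ y, C.Adj x y → y ∈ Y ∨ y = v)
    {x y : V} (hx : x ∈ C.verts) (hxX : x ∈ X) (hyY : y ∈ Y) : y ∉ C.verts := by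
  intro hy
  obtain ⟨hv, hsubX⟩ :=
    hC.neighborSet_subset_of_mem_of_notMem hvX hX hx hxX hy (hXY.notMem_of_mem_right hyY)
  obtain ⟨-, hsubY⟩ :=
    hC.neighborSet_subset_of_mem_of_notMem hvY hY hy hyY hx (hXY.notMem_of_mem_left hxX)
  obtain ⟨w, hw⟩ :=
    Set.nonempty_of_ncard_ne_zero (s := C.neighborSet v) (by rw [hC.2.2 v hv]; simp)
  exact hXY.notMem_of_mem_left (hsubX hw) (hsubY hw)

lemma SimpleGraph.Walk.IsCycle.isCycleSubgraph_toSubgraph {u : V} {c : G.Walk u u}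
    (hc : c.IsCycle) : IsCycleSubgraph c.toSubgraph :=
  ⟨c.verts_toSubgraph ▸ c.support.finite_toSet, c.toSubgraph_connected,
    fun _ hx => hc.ncard_neighborSet_toSubgraph_eq_two (c.mem_verts_toSubgraph.mp hx)⟩

lemma IsCycleBasis.exists_mem_edgeSet {B : Set G.Subgraph} (hB : IsCycleBasis B)
    (hC : IsCycleSubgraph C) {e : Sym2 V} (he : e ∈ C.edgeSet) :
    ∃ C' ∈ B, e ∈ C'.edgeSet := by
  classical
  by_contra! hB'
  have hspan : edgeVec C ∈ Submodule.span (ZMod 2) (edgeVec '' B) :=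
    hB.2.2 ▸ Submodule.subset_span ⟨C, hC, rfl⟩
  have hker : edgeVec '' B ⊆
      LinearMap.ker (LinearMap.proj (R := ZMod 2) (φ := fun _ : Sym2 V => ZMod 2) e) := by
    rintro _ ⟨C', hC', rfl⟩
    simp [edgeVec, hB' C' hC']
  have := Submodule.span_le.mpr hker hspan
  simp [edgeVec, he] at this

lemma IsCycleBasis.exists_mem_verts {B : Set G.Subgraph} (hB : IsCycleBasis B)
    (hC : IsCycleSubgraph C) {z : V} (hz : z ∈ C.verts) :
    ∃ C' ∈ B, z ∈ C'.verts := by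
  obtain ⟨n, hn⟩ :=
    Set.nonempty_of_ncard_ne_zero (s := C.neighborSet z) (by rw [hC.2.2 z hz]; simp)
  obtain ⟨C', hC', he⟩ := hB.exists_mem_edgeSet hC (C.mem_edgeSet.mpr hn)
  exact ⟨C', hC', (C'.mem_edgeSet.mp he).fst_mem⟩

lemma SimpleGraph.ConnectedComponent.adj_mem_or_eq {v : V}
    (c : (G.induce ({v}ᶜ : Set V)).ConnectedComponent) :
    ∀ x ∈ Subtype.val '' c.supp, ∀ y, G.Adj x y →
      y ∈ Subtype.val '' c.supp ∨ y = v := by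
  rintro _ ⟨x, hx, rfl⟩ y hxy
  by_cases hyv : y = v
  · exact .inr hyv
  · refine .inl ⟨⟨y, hyv⟩, ?_, rfl⟩
    rw [ConnectedComponent.mem_supp_iff] at hx ⊢
    rw [← hx]
    exact (ConnectedComponent.connectedComponentMk_eq_of_adj (G := G.induce _)
      (v := x) (w := ⟨y, hyv⟩) hxy).symm

lemma exists_isCycleSubgraph_of_two_le_ncard_neighborSet [Finite V] {X : Set V} {v : V}
    (hv : v ∉ X) (hX : ∀ x ∈ X, ∀ y, G.Adj x y → y ∈ X ∨ y = v)
    (hdeg : ∀ x ∈ X, 2 ≤ (G.neighborSet x).ncard) (hne : X.Nonempty) :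
    ∃ C : G.Subgraph, IsCycleSubgraph C ∧ ∃ z ∈ C.verts, z ∈ X := by
  set S := insert v X
  let v' : S := ⟨v, Set.mem_insert v X⟩
  have hS : ∀ x : S, x ≠ v' → (x : V) ∈ X := fun x hx =>
    x.2.resolve_left fun h => hx (Subtype.ext h)
  have hdegS : ∀ x : S, x ≠ v' → 2 ≤ ((G.induce S).neighborSet x).ncard := by
    intro x hx
    have hsub : G.neighborSet x ⊆ Set.range Subtype.val := fun y hy => by
      rcases hX x (hS x hx) y hy with hy | rfl
      · exact ⟨⟨y, Set.mem_insert_of_mem v hy⟩, rfl⟩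
      · exact ⟨v', rfl⟩
    rw [show (G.induce S).neighborSet x = Subtype.val ⁻¹' G.neighborSet x from rfl,
      Set.ncard_preimage_of_injective_subset_range Subtype.val_injective hsub]
    exact hdeg x (hS x hx)
  obtain ⟨x, hx⟩ := hne
  have hxv' : (⟨x, Set.mem_insert_of_mem v hx⟩ : S) ≠ v' :=
    fun h => hv ((show x = v from congrArg Subtype.val h) ▸ hx)
  have hcyc := not_isAcyclic_of_two_le_ncard_neighborSet v' hdegS ⟨_, hxv'⟩
  simp only [IsAcyclic, not_forall, not_not] at hcyc
  obtain ⟨u, c, hc⟩ := hcyc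
  let c' := c.map (Embedding.induce S).toHom
  refine ⟨c'.toSubgraph, (hc.map Subtype.val_injective).isCycleSubgraph_toSubgraph, ?_⟩
  have hmem : ∀ w ∈ c.support, (w : V) ∈ c'.toSubgraph.verts := fun w hw => by
    rw [Walk.mem_verts_toSubgraph, Walk.support_map]
    exact List.mem_map_of_mem hw
  by_cases hu : u = v'
  · have hsnd : c.snd ≠ v' := hu ▸ (c.adj_snd hc.not_nil).ne'
    exact ⟨c.snd, hmem _ (c.getVert_mem_support 1), hS _ hsnd⟩
  · exact ⟨u, hmem _ c.start_mem_support, hS u hu⟩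

end CycleSubgraph

/-- If a graph `G` that equals its own 2-core (every vertex has
degree at least 2) has a cycle basis all of whose cycles contain the edge
`{t1,t2}`, then `G` is 2-vertex-connected. -/
theorem stmt1 {V : Type*} [Fintype V] (G : SimpleGraph V) (t1 t2 : V)
    (he : G.Adj t1 t2) (hcore : ∀ v : V, 2 ≤ (G.neighborSet v).ncard)
    (B : Set G.Subgraph) (hB : IsCycleBasis B)
    (hroot : ∀ C ∈ B, s(t1, t2) ∈ C.edgeSet) :
    TwoConnected G := by
  refine ⟨three_le_card_of_two_le_ncard_neighborSet t1 (hcore t1), fun v => ?_⟩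
  obtain ⟨t, htv, htB⟩ : ∃ t, t ≠ v ∧ ∀ C ∈ B, t ∈ C.verts := by
    by_cases h1 : t1 = v
    · exact ⟨t2, fun h2 => he.ne (h1.trans h2.symm), fun C hC => (hroot C hC).snd_mem⟩
    · exact ⟨t1, h1, fun C hC => (hroot C hC).fst_mem⟩
  by_contra hdisc
  obtain ⟨w, hw⟩ := not_forall.mp <|
    not_exists.mp (mt (connected_iff_exists_forall_reachable _).mpr hdisc) ⟨t, htv⟩
  set X := Subtype.val '' ((G.induce ({v}ᶜ : Set V)).connectedComponentMk ⟨t, htv⟩).supp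
  set Y := Subtype.val '' ((G.induce ({v}ᶜ : Set V)).connectedComponentMk w).supp
  have hvY : v ∉ Y := fun ⟨y, _, hy⟩ => y.2 hy
  have hXY : Disjoint X Y := by
    rw [Set.disjoint_left]
    rintro _ ⟨x, hx, rfl⟩ ⟨y, hy, hxy⟩
    rw [ConnectedComponent.mem_supp_iff] at hx hy
    rw [Subtype.ext hxy] at hy
    exact hw (ConnectedComponent.eq.mp (hx.symm.trans hy))
  obtain ⟨C, hC, z, hzC, hzY⟩ := exists_isCycleSubgraph_of_two_le_ncard_neighborSet hvY
    (ConnectedComponent.adj_mem_or_eq _) (fun x _ => hcore x) ⟨w, w, rfl, rfl⟩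
  obtain ⟨C', hC'B, hzC'⟩ := hB.exists_mem_verts hC hzC
  have hclosed (c : (G.induce ({v}ᶜ : Set V)).ConnectedComponent) (x : V)
      (hx : x ∈ Subtype.val '' c.supp) (y : V) (hxy : C'.Adj x y) :=
    c.adj_mem_or_eq x hx y (C'.adj_sub hxy)
  exact (hB.1 C' hC'B).notMem_verts_of_disjoint hXY (fun ⟨y, _, hy⟩ => y.2 hy) hvY
    (hclosed _) (hclosed _) (htB C' hC'B) ⟨⟨t, htv⟩, rfl, rfl⟩ hzY hzC'
end

section
/- Let G be a 2-vertex-connected graph with a designated edge e, and let P_0 = e, P_1, ..., P_k be an open ear decomposition of G starting with e. For each i with 1 ≤ i ≤ k, let C_i be a cycle consisting of e, the edges of P_i, and two vertex-disjoint paths within the union of ears P_0,...,P_{i-1} connecting the endpoints of P_i to the endpoints of e. Then the cycles C_1,...,C_k form a cycle basis of G, and every C_i contains e. -/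
open SimpleGraph

/-- An open ear decomposition of `G`: a sequence of paths (ears) `W 0, …, W k`
whose union is `G`, where `W 0` is a single edge, each later ear has its two
distinct endpoints in earlier ears and all interior vertices new, and distinct
ears share no edges. -/
def IsOpenEarDecomp {V : Type*} (G : SimpleGraph V) (k : ℕ) (a b : Fin (k + 1) → V)
    (W : ∀ i, G.Walk (a i) (b i)) : Prop :=
  (∀ i, (W i).IsPath) ∧ (W 0).length = 1 ∧
  (∀ i : Fin (k + 1), 0 < i.1 →
    a i ≠ b i ∧
    (∃ j, j < i ∧ a i ∈ (W j).support) ∧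
    (∃ j, j < i ∧ b i ∈ (W j).support) ∧
    (∀ v ∈ (W i).support, v ≠ a i → v ≠ b i → ∀ j, j < i → v ∉ (W j).support)) ∧
  (∀ i j, i ≠ j → ∀ e ∈ (W i).edges, e ∉ (W j).edges) ∧
  (∀ e, e ∈ G.edgeSet ↔ ∃ i, e ∈ (W i).edges) ∧
  (∀ v : V, ∃ i, v ∈ (W i).support)

/-! Every cycle lies in the kernel of the boundary map `∂ : 𝔽₂^E → 𝔽₂^V`, `∂x(v) = ∑_w x(vw)`.
The cycle `C_i` contains the edges of `P_i`, which no earlier `C_j` meets, so the family is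
triangular, hence independent. For spanning, let `x ∈ ker ∂` be supported on `P_0 ∪ ⋯ ∪ P_i`.
Every interior vertex of `P_i` meets only edges of `P_i`, two of them, so `x` is constant along
`P_i`, and subtracting that constant times `C_i` clears `P_i`. What finally remains is supported
on the single edge `P_0`, hence is zero. -/

section Boundary

variable {V : Type*} [Fintype V] (R : Type*) [Semiring R]

@[simps]
def edgeBoundary : (Sym2 V → R) →ₗ[R] (V → R) where
  toFun x v := ∑ w, x s(v, w)
  map_add' x y := by ext v; simp [Finset.sum_add_distrib]
  map_smul' c x := by ext v; simp [Finset.mul_sum]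

variable {R}

theorem eq_zero_of_support_subset_singleton {x : Sym2 V → R}
    (hx : x ∈ LinearMap.ker (edgeBoundary R)) {u v : V}
    (hsupp : Function.support x ⊆ {s(u, v)}) : x = 0 := by
  have huv : x s(u, v) = 0 := by
    have hu := congrFun (LinearMap.mem_ker.mp hx) u
    rwa [edgeBoundary_apply, Finset.sum_eq_single v (fun w _ hw => ?_) (by simp)] at hu
    by_contra h
    exact hw (Sym2.congr_right.mp (hsupp h))
  funext e
  by_contra h
  rw [Set.mem_singleton_iff.mp (hsupp h)] at h
  exact h huv

theorem edgeBoundary_edgeVec_apply {G : SimpleGraph V} (C : G.Subgraph) (v : V) :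
    edgeBoundary (ZMod 2) (edgeVec C) v = (C.neighborSet v).ncard := by
  classical
  have hnbr : C.neighborSet v = ↑(Finset.univ.filter (C.Adj v)) := by ext; simp
  rw [hnbr, Set.ncard_coe_finset]
  simp [edgeVec, Finset.sum_boole]

theorem edgeVec_mem_ker_edgeBoundary {G : SimpleGraph V} {C : G.Subgraph}
    (hC : IsCycleSubgraph C) : edgeVec C ∈ LinearMap.ker (edgeBoundary (ZMod 2)) := by
  ext v
  rw [edgeBoundary_edgeVec_apply]
  by_cases hv : v ∈ C.verts
  · rw [hC.2.2 v hv]; rfl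
  · have hnbr : C.neighborSet v = ∅ :=
      Set.eq_empty_of_forall_notMem fun _ hw => hv (Subgraph.Adj.fst_mem hw)
    rw [hnbr, Set.ncard_empty]; rfl

end Boundary

section CharacteristicTwo

variable {V R : Type*} [Fintype V] [Ring R] [CharP R 2]

theorem eq_of_edgeBoundary_apply_eq_zero {x : Sym2 V → R} {v p q : V} (hpq : p ≠ q)
    (hx : edgeBoundary R x v = 0) (hsupp : ∀ w, x s(v, w) ≠ 0 → w = p ∨ w = q) :
    x s(v, p) = x s(v, q) := by
  classical
  rw [edgeBoundary_apply, ← Finset.sum_subset (Finset.subset_univ {p, q}),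
    Finset.sum_pair hpq] at hx
  · exact CharTwo.add_eq_zero.mp hx
  · intro w _ hw
    by_contra h
    rcases hsupp w h with rfl | rfl <;> simp at hw

theorem eq_on_edges_of_isPath {G : SimpleGraph V} {x : Sym2 V → R}
    (hx : x ∈ LinearMap.ker (edgeBoundary R)) {u w : V} {p : G.Walk u w} (hp : p.IsPath)
    (hint : ∀ v ∈ p.support, v ≠ u → v ≠ w → ∀ e, x e ≠ 0 → v ∈ e → e ∈ p.edges) :
    ∀ e ∈ p.edges, ∀ e' ∈ p.edges, x e = x e' := by
  induction p with
  | nil => simp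
  | @cons u u' w huu' q ih =>
    obtain ⟨hq, hu⟩ := (Walk.cons_isPath_iff huu' q).mp hp
    have hqint : ∀ v ∈ q.support, v ≠ u' → v ≠ w → ∀ e, x e ≠ 0 → v ∈ e → e ∈ q.edges := by
      intro v hv hvu' hvw e hxe hve
      have hvu : v ≠ u := by rintro rfl; exact hu hv
      rcases List.mem_cons.mp (hint v (by simp [hv]) hvu hvw e hxe hve) with rfl | he
      · rcases Sym2.mem_iff.mp hve with h | h <;> contradiction
      · exact he
    have hqconst := ih hq hqint
    suffices hfirst : ∀ e ∈ q.edges, x s(u, u') = x e by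
      simp only [Walk.edges_cons, List.mem_cons]
      rintro e (rfl | he) e' (rfl | he')
      · rfl
      · exact hfirst e' he'
      · exact (hfirst e he).symm
      · exact hqconst e he e' he'
    cases q with
    | nil => simp
    | @cons _ u'' _ hu'u'' r =>
      obtain ⟨-, hu'r⟩ := (Walk.cons_isPath_iff hu'u'' r).mp hq
      have huu'' : u ≠ u'' := fun h => hu (by simp [h])
      have hu'w : u' ≠ w := fun h => hu'r (h ▸ r.end_mem_support)
      have hsupp : ∀ t, x s(u', t) ≠ 0 → t = u ∨ t = u'' := by
        intro t ht
        have := hint u' (by simp) huu'.ne.symm hu'w _ ht (Sym2.mem_mk_left _ _)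
        simp only [Walk.edges_cons, List.mem_cons] at this
        rcases this with h | h | h
        · exact Or.inl (Sym2.congr_right.mp (h.trans Sym2.eq_swap))
        · exact Or.inr (Sym2.congr_right.mp h)
        · exact absurd (Walk.fst_mem_support_of_mem_edges r h) hu'r
      intro e he
      rw [Sym2.eq_swap, eq_of_edgeBoundary_apply_eq_zero huu'' (congrFun hx u') hsupp]
      exact hqconst _ (by simp) e he

end CharacteristicTwo

theorem linearIndependent_of_apply_eq_one_of_apply_eq_zero {ι α R : Type*} [Fintype ι]
    [LinearOrder ι] [Ring R] {v : ι → α → R} (f : ι → α) (hdiag : ∀ i, v i (f i) = 1)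
    (hlt : ∀ i j, j < i → v j (f i) = 0) : LinearIndependent R v := by
  classical
  rw [Fintype.linearIndependent_iff]
  intro g hg i
  induction i using WellFoundedGT.induction with
  | _ i ih =>
    have hsum := congrFun hg (f i)
    rwa [Finset.sum_apply, Finset.sum_eq_single i (fun j _ hji => ?_) (by simp),
      Pi.smul_apply, hdiag, smul_eq_mul, mul_one] at hsum
    rcases hji.lt_or_gt with hji | hji
    · simp [hlt i j hji]
    · simp [ih j hji]

theorem SimpleGraph.Walk.edges_eq_singleton_of_length_eq_one {V : Type*} {G : SimpleGraph V}
    {u v : V} {p : G.Walk u v} (hp : p.length = 1) : p.edges = [s(u, v)] := by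
  cases p with
  | nil => simp at hp
  | cons _ q =>
    cases q with
    | nil => rfl
    | cons _ _ => simp at hp

section EarDecomposition

variable {V : Type*} {G : SimpleGraph V} {k : ℕ} {a b : Fin (k + 1) → V}
  {W : ∀ i, G.Walk (a i) (b i)}

def earEdgesUpTo (W : ∀ i, G.Walk (a i) (b i)) (i : Fin (k + 1)) : Set (Sym2 V) :=
  {e | ∃ j ≤ i, e ∈ (W j).edges}

theorem mem_earEdgesUpTo_castSucc {i : Fin k} {e : Sym2 V} (he : e ∈ earEdgesUpTo W i.succ)
    (he' : e ∉ (W i.succ).edges) : e ∈ earEdgesUpTo W i.castSucc := by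
  obtain ⟨j, hj, hje⟩ := he
  refine ⟨j, Fin.le_castSucc_iff.mpr (hj.lt_of_ne ?_), hje⟩
  rintro rfl
  exact he' hje

namespace IsOpenEarDecomp

variable (hear : IsOpenEarDecomp G k a b W)
include hear

theorem edges_zero : (W 0).edges = [s(a 0, b 0)] :=
  Walk.edges_eq_singleton_of_length_eq_one hear.2.1

theorem exists_mem_edges {i : Fin (k + 1)} (hi : 0 < i.1) : ∃ e, e ∈ (W i).edges := by
  by_contra! h
  exact (hear.2.2.1 i hi).1 (Walk.edges_eq_nil.mp (List.eq_nil_iff_forall_not_mem.mpr h)).eq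

theorem edgeSet_subset_earEdgesUpTo_last : G.edgeSet ⊆ earEdgesUpTo W (Fin.last k) := by
  intro e he
  obtain ⟨j, hj⟩ := (hear.2.2.2.2.1 e).mp he
  exact ⟨j, Fin.le_last j, hj⟩

theorem mem_edges_of_mem_earEdgesUpTo {i : Fin (k + 1)} (hi : 0 < i.1) {v : V}
    (hv : v ∈ (W i).support) (hva : v ≠ a i) (hvb : v ≠ b i) {e : Sym2 V}
    (he : e ∈ earEdgesUpTo W i) (hve : v ∈ e) : e ∈ (W i).edges := by
  obtain ⟨j, hj, hje⟩ := he
  rcases hj.lt_or_eq with hj | rfl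
  · exact absurd (Walk.mem_support_of_mem_edges hje hve)
      ((hear.2.2.1 i hi).2.2.2 v hv hva hvb j hj)
  · exact hje

variable {C : Fin k → G.Subgraph} (hWC : ∀ i, ∀ e ∈ (W i.succ).edges, e ∈ (C i).edgeSet)
  (hCW : ∀ i, (C i).edgeSet ⊆ earEdgesUpTo W i.succ)
include hWC hCW

theorem mem_span_edgeVec_of_support_subset [Fintype V]
    (hker : ∀ i, edgeVec (C i) ∈ LinearMap.ker (edgeBoundary (ZMod 2)))
    (i : Fin (k + 1)) {x : Sym2 V → ZMod 2} (hx : x ∈ LinearMap.ker (edgeBoundary (ZMod 2)))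
    (hsupp : Function.support x ⊆ earEdgesUpTo W i) :
    x ∈ Submodule.span (ZMod 2) (edgeVec '' Set.range C) := by
  induction i using Fin.induction generalizing x with
  | zero =>
    suffices x = 0 from this ▸ zero_mem _
    refine eq_zero_of_support_subset_singleton (u := a 0) (v := b 0) hx fun e he => ?_
    obtain ⟨j, hj, hje⟩ := hsupp he
    rw [Fin.le_zero_iff.mp hj, hear.edges_zero] at hje
    exact List.mem_singleton.mp hje
  | succ i ih =>
    obtain ⟨f, hf⟩ := hear.exists_mem_edges i.succ_pos
    have hconst : ∀ e ∈ (W i.succ).edges, x e = x f := fun e he =>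
      eq_on_edges_of_isPath hx (hear.1 _) (fun v hv hva hvb e hxe hve =>
        hear.mem_edges_of_mem_earEdgesUpTo i.succ_pos hv hva hvb (hsupp hxe) hve) e he f hf
    set y := x - x f • edgeVec (C i) with hy
    have hyker : y ∈ LinearMap.ker (edgeBoundary (ZMod 2)) :=
      sub_mem hx (Submodule.smul_mem _ _ (hker i))
    have hysupp : Function.support y ⊆ earEdgesUpTo W i.castSucc := by
      intro e hye
      refine mem_earEdgesUpTo_castSucc ?_ fun he => hye ?_
      · by_cases hxe : x e = 0
        · refine hCW i (by_contra fun hC => hye ?_)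
          simp [hy, edgeVec, hxe, hC]
        · exact hsupp hxe
      · simp [hy, edgeVec, hWC i e he, hconst e he]
    have hxy : x = y + x f • edgeVec (C i) := by rw [hy, sub_add_cancel]
    rw [hxy]
    exact add_mem (ih hyker hysupp)
      (Submodule.smul_mem _ _ (Submodule.subset_span ⟨C i, ⟨i, rfl⟩, rfl⟩))

theorem linearIndependent_edgeVec : LinearIndependent (ZMod 2) fun i => edgeVec (C i) := by
  choose f hf using fun i : Fin k => hear.exists_mem_edges i.succ_pos
  refine linearIndependent_of_apply_eq_one_of_apply_eq_zero f
    (fun i => by simp [edgeVec, hWC i _ (hf i)]) fun i j hji => ?_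
  have hfj : f i ∉ (C j).edgeSet := by
    intro hfj
    obtain ⟨j', hj', hfj'⟩ := hCW j hfj
    exact hear.2.2.2.1 i.succ j' (hj'.trans_lt (Fin.succ_lt_succ_iff.mpr hji)).ne' _ (hf i) hfj'
  simp [edgeVec, hfj]

end IsOpenEarDecomp

end EarDecomposition

theorem stmt2_general {V : Type*} [Fintype V] (G : SimpleGraph V) (t1 t2 : V)
    (k : ℕ) (a b : Fin (k + 1) → V) (W : ∀ i, G.Walk (a i) (b i))
    (hear : IsOpenEarDecomp G k a b W)
    (C : Fin k → G.Subgraph)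
    (hC : ∀ i : Fin k,
      IsCycleSubgraph (C i) ∧
      s(t1, t2) ∈ (C i).edgeSet ∧
      (∀ e ∈ (W i.succ).edges, e ∈ (C i).edgeSet) ∧
      (∀ e ∈ (C i).edgeSet,
        e ∈ (W i.succ).edges ∨ ∃ j : Fin (k + 1), j < i.succ ∧ e ∈ (W j).edges)) :
    IsCycleBasis (Set.range C) ∧ ∀ i, s(t1, t2) ∈ (C i).edgeSet := by
  have hker i := edgeVec_mem_ker_edgeBoundary (hC i).1
  have hWC i := (hC i).2.2.1
  have hCW : ∀ i, (C i).edgeSet ⊆ earEdgesUpTo W i.succ := fun i e he =>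
    ((hC i).2.2.2 e he).elim (fun h => ⟨_, le_rfl, h⟩) fun ⟨j, hj, h⟩ => ⟨j, hj.le, h⟩
  have hli := hear.linearIndependent_edgeVec hWC hCW
  have hCinj : Function.Injective C := Function.Injective.of_comp (f := edgeVec) hli.injective
  refine ⟨⟨Set.forall_mem_range.mpr fun i => (hC i).1,
    (linearIndepOn_range_iff hCinj edgeVec).mpr hli, le_antisymm ?_ ?_⟩, fun i => (hC i).2.1⟩
  · exact Submodule.span_mono (Set.image_mono fun D ⟨i, hi⟩ => hi ▸ (hC i).1)
  · refine Submodule.span_le.mpr ?_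
    rintro _ ⟨D, hD, rfl⟩
    refine hear.mem_span_edgeVec_of_support_subset hWC hCW hker (Fin.last k)
      (edgeVec_mem_ker_edgeBoundary hD) fun e he => ?_
    have heD : e ∈ D.edgeSet := by by_contra h; simp [edgeVec, h] at he
    exact hear.edgeSet_subset_earEdgesUpTo_last (D.edgeSet_subset heD)

/-- Given an open ear decomposition of a 2-vertex-connected graph
`G` starting with the edge `e = {t1,t2}`, and for each later ear `P_i` a cycle
`C_i` consisting of `e`, the edges of `P_i`, and paths inside the union of the
earlier ears, the cycles `C_1, …, C_k` form a cycle basis of `G`, all of whose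
members contain `e`. -/
theorem stmt2 {V : Type*} [Fintype V] (G : SimpleGraph V) (t1 t2 : V)
    (he : G.Adj t1 t2) (hG : TwoConnected G)
    (k : ℕ) (a b : Fin (k + 1) → V) (W : ∀ i, G.Walk (a i) (b i))
    (hear : IsOpenEarDecomp G k a b W) (ha0 : a 0 = t1) (hb0 : b 0 = t2)
    (C : Fin k → G.Subgraph)
    (hC : ∀ i : Fin k,
      IsCycleSubgraph (C i) ∧
      s(t1, t2) ∈ (C i).edgeSet ∧
      (∀ e ∈ (W i.succ).edges, e ∈ (C i).edgeSet) ∧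
      (∀ e ∈ (C i).edgeSet,
        e ∈ (W i.succ).edges ∨ ∃ j : Fin (k + 1), j < i.succ ∧ e ∈ (W j).edges)) :
    IsCycleBasis (Set.range C) ∧ ∀ i, s(t1, t2) ∈ (C i).edgeSet :=
  stmt2_general G t1 t2 k a b W hear C hC
end

section
/- Let G be a plane graph rooted at an edge e, and let T be a spanning tree of G containing e. Then the fundamental cycle basis determined by T is rooted at e (every fundamental cycle contains e) if and only if the set of edges dual to the edges of (G \ T) ∪ {e} forms a Hamiltonian cycle in the dual graph of G. -/
/-! Multigraphs, given by an endpoint map `ends : E → Sym2 V`, and combinatorial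
plane graphs, given by a primal and a dual incidence structure on a common edge
set related by the circuit–bond duality characteristic of planar embeddings. -/

namespace MG

variable {V E : Type*}

/-- Two vertices are related if some edge of `S` joins them. -/
def Rel (ends : E → Sym2 V) (S : Set E) (v w : V) : Prop :=
  ∃ e ∈ S, ends e = s(v, w)

/-- The edge set `S` connects all vertices of `A` to each other. -/
def ConnOn (ends : E → Sym2 V) (S : Set E) (A : Set V) : Prop :=
  ∀ v ∈ A, ∀ w ∈ A, Relation.ReflTransGen (Rel ends S) v w

/-- The vertices touched by the edge set `S`. -/
def touched (ends : E → Sym2 V) (S : Set E) : Set V :=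
  {v | ∃ e ∈ S, v ∈ ends e}

/-- Degree of `v` in the edge set `S`, loops counting twice. -/
noncomputable def deg (ends : E → Sym2 V) (S : Set E) (v : V) : ℕ :=
  {e | e ∈ S ∧ v ∈ ends e ∧ ¬(ends e).IsDiag}.ncard +
    2 * {e | e ∈ S ∧ ends e = s(v, v)}.ncard

/-- A circuit: a nonempty finite edge set that is connected and in which every
touched vertex has degree exactly two. -/
def IsCircuit (ends : E → Sym2 V) (S : Set E) : Prop :=
  S.Nonempty ∧ S.Finite ∧ ConnOn ends S (touched ends S) ∧
    ∀ v ∈ touched ends S, deg ends S v = 2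

/-- An edge cut: the set of all edges with exactly one endpoint in some vertex
set `A`. -/
def IsCut (ends : E → Sym2 V) (S : Set E) : Prop :=
  ∃ A : Set V, ∀ e, e ∈ S ↔ ∃ v ∈ A, ∃ w ∈ Aᶜ, ends e = s(v, w)

/-- A bond: a minimal nonempty edge cut. -/
def IsBond (ends : E → Sym2 V) (S : Set E) : Prop :=
  S.Nonempty ∧ IsCut ends S ∧
    ∀ S', S'.Nonempty → IsCut ends S' → S' ⊆ S → S' = S

/-- The edge set `S` connects the whole vertex set. -/
def SpanningConn (ends : E → Sym2 V) (S : Set E) : Prop :=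
  ConnOn ends S Set.univ

/-- An acyclic edge set: one containing no circuit. -/
def Acyclic (ends : E → Sym2 V) (S : Set E) : Prop :=
  ¬∃ C, C ⊆ S ∧ IsCircuit ends C

/-- A spanning tree: a spanning connected acyclic edge set. -/
def IsSpanningTree (ends : E → Sym2 V) (S : Set E) : Prop :=
  SpanningConn ends S ∧ Acyclic ends S

/-- A Hamiltonian cycle: a circuit touching every vertex. -/
def IsHamCycle (ends : E → Sym2 V) (S : Set E) : Prop :=
  IsCircuit ends S ∧ touched ends S = Set.univ

end MG

/-- A connected plane graph together with its dual: vertices `V`, faces `F`, and a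
common (finite) edge set `E`, with primal endpoints `endsV` and dual endpoints
`endsF`; primal and dual are connected and satisfy the circuit–bond duality that
characterizes planar embeddings (a set of edges is a circuit of one graph exactly
when it is a bond of the other). -/
structure PlaneGraph (V F E : Type*) where
  endsV : E → Sym2 V
  endsF : E → Sym2 F
  finiteE : Finite E
  connV : MG.SpanningConn endsV Set.univ
  connF : MG.SpanningConn endsF Set.univ
  circuit_bond : ∀ S : Set E, MG.IsCircuit endsV S ↔ MG.IsBond endsF S
  bond_circuit : ∀ S : Set E, MG.IsCircuit endsF S ↔ MG.IsBond endsV S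

/-!
Write `D = Tᶜ ∪ {e}`. By circuit–bond duality, `D` is a dual circuit iff it is a primal bond.
If every fundamental cycle passes through `e`, then `D` is exactly the set of edges between the two
components of `T \ {e}`, and as both sides are connected in `T \ {e}` this cut is a bond.
Conversely, if `D` is a cut and the fundamental cycle of `f` avoided `e`, it would meet `D` only in
`f`, whereas a circuit meets every cut in an even number of edges. Finally `D` touches every face
`φ`: otherwise all edges at `φ` lie in `T`, but they form a dual cut, which contains a dual bond,
that is, a primal circuit inside the tree.
-/

namespace MG

variable {V E : Type*} {ends : E → Sym2 V} {S T C : Set E} {A : Set V} {e f g : E}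
  {u v w x y : V}

open Relation SimpleGraph

lemma exists_ends_eq (ends : E → Sym2 V) (g : E) : ∃ v w, ends g = s(v, w) := by
  induction ends g using Sym2.ind with | _ v w => exact ⟨v, w, rfl⟩

lemma rel_symm (h : Rel ends S v w) : Rel ends S w v := by
  obtain ⟨g, hg, hvw⟩ := h
  exact ⟨g, hg, hvw.trans Sym2.eq_swap⟩

instance : Std.Symm (Rel ends S) := ⟨fun _ _ => rel_symm⟩

lemma reflTransGen_rel_symm (h : ReflTransGen (Rel ends S) v w) :
    ReflTransGen (Rel ends S) w v :=
  Std.Symm.symm _ _ h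

lemma reflTransGen_rel_mono (hST : S ⊆ T) (h : ReflTransGen (Rel ends S) v w) :
    ReflTransGen (Rel ends T) v w :=
  ReflTransGen.mono (fun _ _ ⟨g, hg, hvw⟩ => ⟨g, hST hg, hvw⟩) _ _ h

def Crosses (ends : E → Sym2 V) (A : Set V) (g : E) : Prop :=
  ∃ v ∈ A, ∃ w ∈ Aᶜ, ends g = s(v, w)

lemma crosses_iff (h : ends g = s(v, w)) : Crosses ends A g ↔ ¬(v ∈ A ↔ w ∈ A) := by
  constructor
  · rintro ⟨v', hv', w', hw', h'⟩
    rw [h, Sym2.eq_iff] at h'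
    rcases h' with ⟨rfl, rfl⟩ | ⟨rfl, rfl⟩ <;> tauto
  · intro hvw
    by_cases hv : v ∈ A
    · exact ⟨v, hv, w, fun hw => hvw (iff_of_true hv hw), h⟩
    · exact ⟨w, by tauto, v, hv, h.trans Sym2.eq_swap⟩

lemma isCut_setOf_crosses (A : Set V) : IsCut ends {g | Crosses ends A g} :=
  ⟨A, fun _ => Iff.rfl⟩

lemma mem_iff_of_reflTransGen (hS : ∀ g ∈ S, ¬Crosses ends A g)
    (h : ReflTransGen (Rel ends S) v w) : v ∈ A ↔ w ∈ A := by
  induction h with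
  | refl => rfl
  | tail _ hstep ih =>
    obtain ⟨g, hg, hends⟩ := hstep
    exact ih.trans (not_not.1 ((crosses_iff hends).not.1 (hS g hg)))

lemma exists_crosses_of_reflTransGen (h : ReflTransGen (Rel ends S) v w) (hv : v ∈ A)
    (hw : w ∉ A) : ∃ g ∈ S, Crosses ends A g := by
  by_contra! hS
  exact hw ((mem_iff_of_reflTransGen hS h).1 hv)

open Classical in
noncomputable def endCount (ends : E → Sym2 V) (g : E) (v : V) : ℕ :=
  (if v ∈ ends g ∧ ¬(ends g).IsDiag then 1 else 0) + 2 * if ends g = s(v, v) then 1 else 0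

lemma endCount_eq [DecidableEq V] (h : ends g = s(x, y)) (v : V) :
    endCount ends g v = (if v = x then 1 else 0) + if v = y then 1 else 0 := by
  rw [endCount, h]
  simp only [Sym2.mem_iff, Sym2.mk_isDiag_iff, Sym2.eq_iff]
  split_ifs <;> grind

open Classical in
lemma deg_eq_sum (hS : S.Finite) (v : V) :
    deg ends S v = ∑ g ∈ hS.toFinset, endCount ends g v := by
  have hcard (p : E → Prop) [DecidablePred p] :
      {g | g ∈ S ∧ p g}.ncard = ∑ g ∈ hS.toFinset, if p g then 1 else 0 := by
    rw [Finset.sum_boole, Nat.cast_id, ← Set.ncard_coe_finset]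
    congr; ext; simp
  simp only [deg, endCount, Finset.sum_add_distrib, ← Finset.mul_sum, hcard]

lemma deg_insert (hS : S.Finite) (hg : g ∉ S) (v : V) :
    deg ends (insert g S) v = deg ends S v + endCount ends g v := by
  classical
  rw [deg_eq_sum (hS.insert g), deg_eq_sum hS, Set.Finite.toFinset_insert,
    Finset.sum_insert (by simpa using hg), add_comm]

lemma touched_finite (hS : S.Finite) : (touched ends S).Finite := by
  classical
  refine (hS.biUnion fun g _ => (ends g).toFinset.finite_toSet).subset ?_
  rintro v ⟨g, hg, hv⟩
  exact Set.mem_biUnion hg (Sym2.mem_toFinset.2 hv)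

lemma odd_sum_endCount_iff {t : Finset V} (ht : ∀ v ∈ ends g, v ∈ t ↔ v ∈ A) :
    Odd (∑ v ∈ t, endCount ends g v) ↔ Crosses ends A g := by
  classical
  obtain ⟨a, b, hab⟩ := exists_ends_eq ends g
  rw [hab] at ht
  simp only [endCount_eq hab, Finset.sum_add_distrib, Finset.sum_ite_eq', crosses_iff hab,
    ht a (Sym2.mem_mk_left a b), ht b (Sym2.mem_mk_right a b)]
  by_cases ha : a ∈ A <;> by_cases hb : b ∈ A <;> simp [ha, hb]

lemma even_ncard_crosses (hS : S.Finite) (hdeg : ∀ v ∈ touched ends S, Even (deg ends S v))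
    (A : Set V) : Even {g | g ∈ S ∧ Crosses ends A g}.ncard := by
  classical
  set t := ((touched_finite (ends := ends) hS).inter_of_left A).toFinset
  have hsum : Even (∑ v ∈ t, deg ends S v) :=
    Finset.even_sum _ fun v hv => hdeg v (by simp_all [t])
  rw [Finset.sum_congr rfl fun v _ => deg_eq_sum hS v, Finset.sum_comm,
    Finset.even_sum_iff_even_card_odd, ← Set.ncard_coe_finset] at hsum
  convert hsum using 3
  ext g
  simp only [Set.mem_ofPred_eq, Finset.coe_filter, Set.Finite.mem_toFinset, and_congr_right_iff]
  intro hg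
  refine (odd_sum_endCount_iff fun v hv => ?_).symm
  have : v ∈ touched ends S := ⟨g, hg, hv⟩
  simp [t, this]

lemma IsCircuit.inter_isCut_ne_singleton (hC : IsCircuit ends C) (hS : IsCut ends S) (f : E) :
    C ∩ S ≠ {f} := by
  obtain ⟨A, hA⟩ := hS
  intro hCS
  have heven := even_ncard_crosses hC.2.1
    (fun v hv => (hC.2.2.2 v hv).symm ▸ even_two) A
  have hcross : {g | g ∈ C ∧ Crosses ends A g} = C ∩ S := by
    ext g; simp [hA g, Crosses]
  rw [hcross, hCS, Set.ncard_singleton] at heven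
  exact Nat.not_even_one heven

def adjGraph (ends : E → Sym2 V) (S : Set E) : SimpleGraph V :=
  SimpleGraph.fromRel (Rel ends S)

lemma reachable_adjGraph (h : ReflTransGen (Rel ends S) x y) :
    (adjGraph ends S).Reachable x y := by
  induction h with
  | refl => rfl
  | @tail v w _ hvw ih =>
    by_cases hne : v = w
    · exact hne ▸ ih
    · exact ih.trans (Adj.reachable ((fromRel_adj _ _ _).2 ⟨hne, Or.inl hvw⟩))

lemma exists_edge_of_adjGraph_adj (h : (adjGraph ends S).Adj x y) : ∃ g ∈ S, ends g = s(x, y) :=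
  ((fromRel_adj _ _ _).1 h).2.elim id rel_symm

lemma exists_edgeSet_of_isPath [DecidableEq V] :
    ∀ {x y : V} (p : (adjGraph ends S).Walk x y), p.IsPath →
    ∃ Q ⊆ S, Q.Finite ∧ touched ends Q ⊆ {v | v ∈ p.support} ∧
      (∀ v ∈ p.support, ReflTransGen (Rel ends Q) x v) ∧
      ∀ v, deg ends Q v + (if v = x then 1 else 0) + (if v = y then 1 else 0) =
        if v ∈ p.support then 2 else 0
  | x, _, .nil, _ => ⟨∅, Set.empty_subset _, Set.finite_empty, by simp [touched],
      fun v hv => by rw [List.mem_singleton.1 hv],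
      fun v => by by_cases hv : v = x <;> simp [deg, hv]⟩
  | a, c, .cons (v := b) hadj p, hp => by
    rw [Walk.cons_isPath_iff] at hp
    obtain ⟨Q, hQS, hQ, htouch, hconn, hdeg⟩ := exists_edgeSet_of_isPath p hp.1
    obtain ⟨g, hgS, hg⟩ := exists_edge_of_adjGraph_adj hadj
    have hgQ : g ∉ Q := fun h => hp.2 (htouch ⟨g, h, hg ▸ Sym2.mem_mk_left _ _⟩)
    refine ⟨insert g Q, Set.insert_subset hgS hQS, hQ.insert g, ?_, ?_, fun v => ?_⟩
    · rintro v ⟨g', hg' | hg', hv⟩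
      · subst hg'
        rw [hg, Sym2.mem_iff] at hv
        rcases hv with rfl | rfl <;> simp
      · exact List.mem_cons_of_mem _ (htouch ⟨g', hg', hv⟩)
    · simp only [Walk.support_cons, List.mem_cons]
      rintro v (rfl | hv)
      · exact .refl
      · exact .head ⟨g, Set.mem_insert _ _, hg⟩
          (reflTransGen_rel_mono (Set.subset_insert _ _) (hconn v hv))
    · have hv := hdeg v
      have hb : b ∈ p.support := p.start_mem_support
      have hc : c ∈ p.support := p.end_mem_support
      rw [deg_insert hQ hgQ, endCount_eq hg, Walk.support_cons]
      by_cases hva : v = a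
      · subst hva
        simp_all [hadj.ne, (ne_of_mem_of_not_mem hc hp.2).symm]
      · simp_all

lemma exists_isCircuit_of_reflTransGen (h : ReflTransGen (Rel ends S) x y) (hf : f ∉ S)
    (hends : ends f = s(x, y)) : ∃ C ⊆ insert f S, IsCircuit ends C ∧ f ∈ C := by
  classical
  obtain ⟨p, hp⟩ := (reachable_adjGraph h).some.toPath
  obtain ⟨Q, hQS, hQ, htouch, hconn, hdeg⟩ := exists_edgeSet_of_isPath p hp
  have hfQ : f ∉ Q := fun hfQ => hf (hQS hfQ)
  have htouch' : touched ends (insert f Q) ⊆ {v | v ∈ p.support} := by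
    rintro v ⟨g, rfl | hg, hv⟩
    · rw [hends, Sym2.mem_iff] at hv
      rcases hv with rfl | rfl
      exacts [p.start_mem_support, p.end_mem_support]
    · exact htouch ⟨g, hg, hv⟩
  have hconn' : ∀ v ∈ touched ends (insert f Q), ReflTransGen (Rel ends (insert f Q)) x v :=
    fun v hv => reflTransGen_rel_mono (Set.subset_insert _ _) (hconn v (htouch' hv))
  refine ⟨insert f Q, Set.insert_subset_insert hQS,
    ⟨⟨f, Set.mem_insert _ _⟩, hQ.insert f, ?_, fun v hv => ?_⟩, Set.mem_insert _ _⟩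
  · exact fun v hv w hw => (reflTransGen_rel_symm (hconn' v hv)).trans (hconn' w hw)
  · have hv' := hdeg v
    rw [if_pos (show v ∈ p.support from htouch' hv)] at hv'
    rw [deg_insert hQ hfQ, endCount_eq hends]
    omega

lemma isBond_setOf_crosses (hne : ∃ g, Crosses ends A g)
    (hA : ConnOn ends {g | ¬Crosses ends A g} A)
    (hAc : ConnOn ends {g | ¬Crosses ends A g} Aᶜ) :
    IsBond ends {g | Crosses ends A g} := by
  refine ⟨hne, isCut_setOf_crosses A, fun S' ⟨g₀, hg₀⟩ ⟨A', hA'⟩ hsub => ?_⟩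
  have hside : ∀ u u', (u ∈ A ↔ u' ∈ A) → (u ∈ A' ↔ u' ∈ A') := by
    intro u u' huu'
    refine mem_iff_of_reflTransGen
      (fun g (hg : ¬Crosses ends A g) hg' => hg (hsub ((hA' g).2 hg'))) ?_
    by_cases hu : u ∈ A
    exacts [hA u hu u' (huu'.1 hu), hAc u hu u' (mt huu'.2 hu)]
  refine hsub.antisymm fun g (hg : Crosses ends A g) => ?_
  obtain ⟨a, b, hab⟩ := exists_ends_eq ends g
  obtain ⟨a₀, b₀, hab₀⟩ := exists_ends_eq ends g₀
  have h₀ := (crosses_iff hab₀).1 ((hA' g₀).1 hg₀)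
  have h₀' := (crosses_iff hab₀).1 (hsub hg₀)
  rw [crosses_iff hab] at hg
  refine (hA' g).2 ((crosses_iff hab).2 ?_)
  by_cases haa₀ : a ∈ A ↔ a₀ ∈ A
  · rwa [hside a a₀ haa₀, hside b b₀ (by tauto)]
  · rw [hside a b₀ (by tauto), hside b a₀ (by tauto)]
    exact fun h => h₀ h.symm

lemma IsCut.exists_isBond_subset [Finite E] (hS : IsCut ends S) (hne : S.Nonempty) :
    ∃ B ⊆ S, IsBond ends B := by
  obtain ⟨B, ⟨hBS, hBne, hB⟩, hmin⟩ :=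
    (Set.toFinite {B | B ⊆ S ∧ B.Nonempty ∧ IsCut ends B}).exists_minimal
      ⟨S, subset_rfl, hne, hS⟩
  exact ⟨B, hBS, hBne, hB, fun S' hne' hcut' hsub' =>
    hsub'.antisymm (hmin ⟨hsub'.trans hBS, hne', hcut'⟩ hsub')⟩

lemma reflTransGen_diff_singleton_or (h : ReflTransGen (Rel ends S) x v)
    (he : ends e = s(x, y)) :
    ReflTransGen (Rel ends (S \ {e})) x v ∨ ReflTransGen (Rel ends (S \ {e})) y v := by
  induction h with
  | refl => exact Or.inl .refl
  | tail _ huw ih =>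
    obtain ⟨g, hg, hends⟩ := huw
    by_cases hge : g = e
    · subst hge
      rw [he, Sym2.eq_iff] at hends
      rcases hends with ⟨-, rfl⟩ | ⟨rfl, -⟩
      exacts [Or.inr .refl, Or.inl .refl]
    · exact ih.imp (·.tail ⟨g, ⟨hg, hge⟩, hends⟩) (·.tail ⟨g, ⟨hg, hge⟩, hends⟩)

lemma Acyclic.not_reflTransGen_diff_singleton (hT : Acyclic ends T) (he : e ∈ T)
    (hxy : ends e = s(x, y)) : ¬ReflTransGen (Rel ends (T \ {e})) x y := by
  intro h
  obtain ⟨C, hCT, hC, -⟩ := exists_isCircuit_of_reflTransGen h (fun h => h.2 rfl) hxy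
  exact hT ⟨C, hCT.trans (by simp [he]), hC⟩

lemma SpanningConn.reflTransGen_diff_singleton (hT : SpanningConn ends T)
    (hxy : ends e = s(x, y))
    (huw : ReflTransGen (Rel ends (T \ {e})) x u ↔ ReflTransGen (Rel ends (T \ {e})) x w) :
    ReflTransGen (Rel ends (T \ {e})) u w := by
  have hy (v) (hv : ¬ReflTransGen (Rel ends (T \ {e})) x v) :
      ReflTransGen (Rel ends (T \ {e})) y v :=
    (reflTransGen_diff_singleton_or (hT x trivial v trivial) hxy).resolve_left hv
  by_cases hu : ReflTransGen (Rel ends (T \ {e})) x u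
  · exact (reflTransGen_rel_symm hu).trans (huw.1 hu)
  · exact (reflTransGen_rel_symm (hy u hu)).trans (hy w (mt huw.2 hu))

lemma IsSpanningTree.isBond_compl_union_singleton (hT : IsSpanningTree ends T) (he : e ∈ T)
    (h : ∀ f ∉ T, ∀ C ⊆ insert f T, IsCircuit ends C → f ∈ C → e ∈ C) :
    IsBond ends (Tᶜ ∪ {e}) := by
  obtain ⟨x, y, hxy⟩ := exists_ends_eq ends e
  set R := ReflTransGen (Rel ends (T \ {e}))
  set A := {v | R x v}
  have hy : y ∉ A := hT.2.not_reflTransGen_diff_singleton he hxy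
  have hR : ∀ u w, (u ∈ A ↔ w ∈ A) → R u w :=
    fun _ _ => hT.1.reflTransGen_diff_singleton hxy
  have hcut : Tᶜ ∪ {e} = {g | Crosses ends A g} := by
    ext g
    obtain ⟨u, w, huw⟩ := exists_ends_eq ends g
    simp only [Set.mem_union, Set.mem_compl_iff, Set.mem_singleton_iff, Set.mem_ofPred_eq,
      crosses_iff huw]
    by_cases hge : g = e
    · subst hge
      rw [hxy, Sym2.eq_iff] at huw
      rcases huw with ⟨rfl, rfl⟩ | ⟨rfl, rfl⟩ <;> simp [A, R, ReflTransGen.refl, hy]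
    by_cases hgT : g ∈ T
    · simp only [hgT, hge, not_true, or_false, false_iff, not_not]
      have hg : Rel ends (T \ {e}) u w := ⟨g, ⟨hgT, hge⟩, huw⟩
      exact ⟨fun hu => hu.tail hg, fun hw => hw.tail (rel_symm hg)⟩
    · simp only [hgT, not_false_eq_true, true_or, true_iff]
      intro hsame
      obtain ⟨C, hCT, hC, hgC⟩ :=
        exists_isCircuit_of_reflTransGen (hR u w hsame) (fun h => hgT h.1) huw
      rcases hCT (h g hgT C (hCT.trans (Set.insert_subset_insert Set.sdiff_subset)) hC hgC)
        with rfl | ⟨-, hee⟩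
      exacts [hge rfl, hee rfl]
  have hnotCross : T \ {e} ⊆ {g | ¬Crosses ends A g} := fun g hg hcross =>
    (hcut.symm ▸ hcross : g ∈ Tᶜ ∪ {e}).elim (· hg.1) hg.2
  rw [hcut]
  refine isBond_setOf_crosses ⟨e, (crosses_iff hxy).2 fun hiff => hy (hiff.1 .refl)⟩
    (fun u hu w hw => reflTransGen_rel_mono hnotCross (hR u w (iff_of_true hu hw)))
    (fun u hu w hw => reflTransGen_rel_mono hnotCross (hR u w (iff_of_false hu hw)))

end MG

namespace PlaneGraph

variable {V F E : Type*} (P : PlaneGraph V F E) {T : Set E}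

lemma exists_notMem_mem_endsF_of_acyclic (hT : MG.Acyclic P.endsV T) {φ ψ : F}
    (hφψ : φ ≠ ψ) :
    ∃ g ∉ T, φ ∈ P.endsF g := by
  have := P.finiteE
  obtain ⟨g₀, -, hg₀⟩ := MG.exists_crosses_of_reflTransGen (P.connF φ trivial ψ trivial)
    (Set.mem_singleton φ) hφψ.symm
  obtain ⟨B, hBS, hB⟩ := (MG.isCut_setOf_crosses {φ}).exists_isBond_subset ⟨g₀, hg₀⟩
  obtain ⟨g, hgB, hgT⟩ := Set.not_subset.1 fun hBT => hT ⟨B, hBT, (P.circuit_bond B).2 hB⟩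
  obtain ⟨v, hv, w, -, hvw⟩ := hBS hgB
  exact ⟨g, hgT, hvw ▸ (Set.mem_singleton_iff.1 hv) ▸ Sym2.mem_mk_left _ _⟩

lemma touched_endsF_compl_union_eq_univ (hT : MG.Acyclic P.endsV T) (e : E) :
    MG.touched P.endsF (Tᶜ ∪ {e}) = Set.univ := by
  refine Set.eq_univ_of_forall fun φ => ?_
  by_cases hφ : ∀ ψ, ψ = φ
  · obtain ⟨a, b, hab⟩ := MG.exists_ends_eq P.endsF e
    exact ⟨e, Or.inr rfl, hab ▸ hφ a ▸ Sym2.mem_mk_left _ _⟩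
  · obtain ⟨ψ, hψ⟩ := not_forall.1 hφ
    obtain ⟨g, hgT, hφg⟩ := P.exists_notMem_mem_endsF_of_acyclic hT (Ne.symm hψ)
    exact ⟨g, Or.inl hgT, hφg⟩

end PlaneGraph

/-- Let `G` be a plane graph rooted at the edge `e` and `T` a
spanning tree of `G` containing `e`. The fundamental cycle basis of `T` is rooted
at `e` (every fundamental cycle — i.e., every circuit consisting of a non-tree
edge `f` together with tree edges — contains `e`) if and only if the edges dual to
`(G \ T) ∪ {e}` form a Hamiltonian cycle of the dual graph. -/
theorem stmt10 {V F E : Type*} (P : PlaneGraph V F E) (T : Set E)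
    (hT : MG.IsSpanningTree P.endsV T) (e : E) (he : e ∈ T) :
    (∀ f ∉ T, ∀ C : Set E, C ⊆ insert f T → MG.IsCircuit P.endsV C → f ∈ C →
        e ∈ C) ↔
      MG.IsHamCycle P.endsF (Tᶜ ∪ {e}) := by
  constructor
  · intro h
    exact ⟨(P.bond_circuit _).2 (hT.isBond_compl_union_singleton he h),
      P.touched_endsF_compl_union_eq_univ hT.2 e⟩
  · rintro ⟨hD, -⟩ f hf C hCT hC hfC
    by_contra heC
    refine hC.inter_isCut_ne_singleton ((P.bond_circuit _).1 hD).2.1 f ?_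
    ext g
    constructor
    · rintro ⟨hgC, hgT | rfl⟩
      · exact (hCT hgC).resolve_right hgT
      · exact absurd hgC heC
    · rintro rfl
      exact ⟨hfC, Or.inl hf⟩
end

section
/- Every rooted cycle basis of the n-vertex ladder graph (the product of a path with K_2), rooted at one of its end rungs, has total length Ω(n^2): the sum of the lengths of all basis cycles is at least a constant times n^2. -/
open SimpleGraph

/-- The ladder graph `P_k × K_2`: vertices `(i, s)` for `i : Fin k` and
`s : Bool`, with rung edges `{(i, false), (i, true)}` and path edges between
consecutive indices on each side. -/
def ladder (k : ℕ) : SimpleGraph (Fin k × Bool) :=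
  SimpleGraph.fromRel fun p q =>
    (p.1 = q.1 ∧ p.2 ≠ q.2) ∨ (p.2 = q.2 ∧ (p.1 : ℕ) + 1 = (q.1 : ℕ))

/-!
The squares between consecutive rungs are `k` independent cycles of the ladder on columns
`0, …, k`, so a cycle basis has at least `k` cycles. The ladder minus its lower rail is a tree
(a comb), so an even edge vector is determined by its values on the lower rail; hence
independent cycles confined to columns `≤ m` number at most `m`. A rooted cycle meeting
column `m` is connected to column `0`, so it crosses each of the `m` gaps in between and has at
least `m` edges. Thus at most `m` basis cycles have length `≤ m`, and the total length is at
least `1 + 2 + ⋯ + k`.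
-/

open Finset

theorem sum_range_le_sum_of_card_filter_le {ι : Type*} (s : Finset ι) (f : ι → ℕ) {k : ℕ}
    (hs : k ≤ #s) (h : ∀ m < k, #{i ∈ s | f i ≤ m} ≤ m) :
    ∑ m ∈ range (k + 1), m ≤ ∑ i ∈ s, f i := by
  have hcount : ∀ m < k, k - m ≤ #{i ∈ s | m < f i} := by
    intro m hm
    have := card_filter_add_card_filter_not (s := s) (fun i => f i ≤ m)
    simp only [not_le] at this
    have := h m hm
    omega
  calc ∑ m ∈ range (k + 1), m = ∑ m ∈ range k, (k - m) := by
        rw [sum_range_succ', add_zero, ← sum_range_reflect (· + 1)]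
        exact sum_congr rfl fun m hm => by simp only [mem_range] at hm; omega
    _ ≤ ∑ m ∈ range k, #{i ∈ s | m < f i} := sum_le_sum fun m hm => hcount m (mem_range.1 hm)
    _ = ∑ i ∈ s, #{m ∈ range k | m < f i} := by simp only [card_filter]; exact sum_comm
    _ ≤ ∑ i ∈ s, f i := sum_le_sum fun i _ =>
        (card_le_card fun m hm => by simp at hm ⊢; omega).trans (card_range _).le

theorem SimpleGraph.Subgraph.Connected.sub_le_ncard_edgeSet {V : Type*} [Finite V]
    {G : SimpleGraph V} {C : G.Subgraph} (hC : C.Connected) (f : V → ℕ)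
    (hf : ∀ u v, G.Adj u v → f v ≤ f u + 1) {u v : V} (hu : u ∈ C.verts) (hv : v ∈ C.verts) :
    f v - f u ≤ C.edgeSet.ncard := by
  obtain ⟨p⟩ := hC.preconnected ⟨u, hu⟩ ⟨v, hv⟩
  let low : Sym2 V → ℕ := Sym2.lift ⟨fun a b => min (f a) (f b), fun _ _ => min_comm _ _⟩
  have hcross : ∀ m ∈ Set.Ico (f u) (f v), ∃ e ∈ C.edgeSet, low e = m := by
    intro m hm
    obtain ⟨d, -, hd₁, hd₂⟩ := p.exists_boundary_dart {w | f w ≤ m} hm.1 (by simpa using hm.2)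
    have hadj : C.Adj d.fst d.snd := d.adj
    have := hf _ _ (C.adj_sub hadj)
    simp only [Set.mem_ofPred_eq, not_le] at hd₁ hd₂
    exact ⟨s(d.fst, d.snd), hadj, by simp only [low, Sym2.lift_mk]; omega⟩
  calc f v - f u = (Set.Ico (f u) (f v)).ncard := by simp
    _ ≤ (low '' C.edgeSet).ncard := Set.ncard_le_ncard hcross (Set.toFinite _)
    _ ≤ C.edgeSet.ncard := Set.ncard_image_le (Set.toFinite _)

theorem SimpleGraph.Walk.IsCycle.isCycleSubgraph_toSubgraph_s15 {V : Type*} {G : SimpleGraph V}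
    {u : V} {p : G.Walk u u} (hp : p.IsCycle) : IsCycleSubgraph p.toSubgraph := by
  refine ⟨?_, p.toSubgraph_connected, fun v hv => hp.ncard_neighborSet_toSubgraph_eq_two ?_⟩
  · simp
  · simpa using hv

section EvenSpace

variable {V : Type*} [Fintype V]

/-- Vectors supported on `E` with even degree at every vertex: when `E` is an edge set it
contains no diagonal `s(v, v)`, so `∑ w, x s(v, w)` is the degree of `v`. -/
def evenSpace (E : Set (Sym2 V)) : Submodule (ZMod 2) (Sym2 V → ZMod 2) where
  carrier := {x | (∀ e ∉ E, x e = 0) ∧ ∀ v, ∑ w, x s(v, w) = 0}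
  add_mem' := by
    rintro x y ⟨hx₀, hx⟩ ⟨hy₀, hy⟩
    exact ⟨fun e he => by simp [hx₀ e he, hy₀ e he], fun v => by simp [sum_add_distrib, hx, hy]⟩
  zero_mem' := by simp
  smul_mem' := by
    rintro c x ⟨hx₀, hx⟩
    exact ⟨fun e he => by simp [hx₀ e he], fun v => by simp [← mul_sum, hx]⟩

variable {E : Set (Sym2 V)} {x : Sym2 V → ZMod 2}

theorem evenSpace_mono {E' : Set (Sym2 V)} (h : E ⊆ E') : evenSpace E ≤ evenSpace E' :=
  fun _ ⟨hx₀, hx⟩ => ⟨fun e he => hx₀ e fun h' => he (h h'), hx⟩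

theorem edgeVec_mem_evenSpace {G : SimpleGraph V} {C : G.Subgraph} (hC : IsCycleSubgraph C)
    (hE : C.edgeSet ⊆ E) : edgeVec C ∈ evenSpace E := by
  classical
  refine ⟨fun e he => if_neg fun h => he (hE h), fun v => ?_⟩
  have hdeg : ∑ w, edgeVec C s(v, w) = ((C.neighborSet v).ncard : ZMod 2) := by
    simp only [edgeVec, Subgraph.mem_edgeSet, sum_boole, Set.ncard_eq_toFinset_card']
    congr 2
    ext w
    simp
  by_cases hv : v ∈ C.verts
  · rw [hdeg, hC.2.2 v hv]; rfl
  · have hempty : C.neighborSet v = ∅ :=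
      Set.eq_empty_of_forall_notMem fun w hw => hv (C.edge_vert hw)
    rw [hdeg, hempty, Set.ncard_empty, Nat.cast_zero]

theorem apply_eq_zero_of_mem_evenSpace {G : SimpleGraph V} (hx : x ∈ evenSpace G.edgeSet)
    {v w₀ : V} (h : ∀ w, w ≠ w₀ → G.Adj v w → x s(v, w) = 0) : x s(v, w₀) = 0 := by
  rw [← hx.2 v, sum_eq_single w₀ (fun w _ hw => ?_) (by simp)]
  by_cases hvw : G.Adj v w
  · exact h w hw hvw
  · exact hx.1 _ hvw

end EvenSpace

theorem ladder_adj_iff {n : ℕ} {a b : Fin n} {s t : Bool} :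
    (ladder n).Adj (a, s) (b, t) ↔
      (a = b ∧ s ≠ t) ∨ (s = t ∧ ((a : ℕ) + 1 = b ∨ (b : ℕ) + 1 = a)) := by
  simp only [ladder, fromRel_adj]
  grind

theorem ladder_adj_val_le {n : ℕ} {p q : Fin n × Bool} (h : (ladder n).Adj p q) :
    (q.1 : ℕ) ≤ p.1 + 1 := by
  obtain ⟨a, s⟩ := p
  obtain ⟨b, t⟩ := q
  rcases ladder_adj_iff.1 h with ⟨rfl, -⟩ | ⟨-, h | h⟩ <;> dsimp only <;> omega

section Rail

variable {k m : ℕ}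

def railEdge (i : Fin k) : Sym2 (Fin (k + 1) × Bool) :=
  s((i.castSucc, false), (i.succ, false))

theorem eq_zero_of_railEdge_eq_zero {x : Sym2 (Fin (k + 1) × Bool) → ZMod 2}
    (hx : x ∈ evenSpace (ladder (k + 1)).edgeSet) (h : ∀ i, x (railEdge i) = 0) : x = 0 := by
  have hrail : ∀ a b : Fin (k + 1), (a : ℕ) + 1 = b → x s((a, false), (b, false)) = 0 := by
    intro a b hab
    have := h ⟨a, by have := b.isLt; omega⟩
    rwa [railEdge, show (Fin.castSucc ⟨a, _⟩ : Fin (k + 1)) = a from Fin.ext rfl,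
      show (Fin.succ ⟨a, _⟩ : Fin (k + 1)) = b from Fin.ext (by simp [hab])] at this
  have hrung : ∀ a : Fin (k + 1), x s((a, false), (a, true)) = 0 := by
    intro a
    refine apply_eq_zero_of_mem_evenSpace hx fun ⟨b, t⟩ hw hadj => ?_
    rcases ladder_adj_iff.1 hadj with ⟨hab, -⟩ | ⟨rfl, hab | hab⟩
    · simp_all
    · exact hrail a b hab
    · rw [Sym2.eq_swap]; exact hrail b a hab
  -- downward induction from the last column: at `(b, true)` the rung and the edge to
  -- `(b + 1, true)` already vanish
  have htop : ∀ n, ∀ a b : Fin (k + 1), (a : ℕ) + 1 = b → k < b + n →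
      x s((a, true), (b, true)) = 0 := by
    intro n
    induction n with
    | zero => intro a b _ hb; have := b.isLt; omega
    | succ n ih =>
      intro a b hab hb
      rw [Sym2.eq_swap]
      refine apply_eq_zero_of_mem_evenSpace hx fun ⟨c, t⟩ hw hadj => ?_
      rcases ladder_adj_iff.1 hadj with ⟨rfl, ht⟩ | ⟨rfl, hbc | hcb⟩
      · obtain rfl : t = false := by simpa using ht.symm
        rw [Sym2.eq_swap]
        exact hrung b
      · exact ih b c hbc (by omega)
      · exact (hw (congrArg (·, true) (Fin.ext (by omega)))).elim
  funext e
  induction e with | h p q => ?_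
  by_cases hadj : (ladder (k + 1)).Adj p q
  · obtain ⟨a, s⟩ := p
    obtain ⟨b, t⟩ := q
    rcases ladder_adj_iff.1 hadj with ⟨rfl, hst⟩ | ⟨rfl, hab | hab⟩
    · cases s <;> cases t <;> simp only [ne_eq, not_true_eq_false] at hst
      · exact hrung a
      · rw [Sym2.eq_swap]; exact hrung a
    · cases s
      exacts [hrail a b hab, htop (k + 1) a b hab (by omega)]
    · rw [Sym2.eq_swap]
      cases s
      exacts [hrail b a hab, htop (k + 1) b a hab (by omega)]
  · exact hx.1 _ hadj

def ladderSquare (i : Fin k) : (ladder (k + 1)).Walk (i.castSucc, false) (i.castSucc, false) :=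
  .cons (v := (i.succ, false)) (ladder_adj_iff.2 (by simp)) <|
    .cons (v := (i.succ, true)) (ladder_adj_iff.2 (by simp)) <|
    .cons (v := (i.castSucc, true)) (ladder_adj_iff.2 (by simp)) <|
    .cons (ladder_adj_iff.2 (by simp)) .nil

theorem ladderSquare_isCycle (i : Fin k) : (ladderSquare i).IsCycle := by
  simp only [ladderSquare, Walk.cons_isCycle_iff]
  simp [Fin.ext_iff]

theorem railEdge_mem_edges_ladderSquare {i j : Fin k} :
    railEdge j ∈ (ladderSquare i).edges ↔ j = i := by
  simp [ladderSquare, railEdge, Fin.ext_iff]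
  omega

def railEval (hm : m ≤ k) :
    (Sym2 (Fin (k + 1) × Bool) → ZMod 2) →ₗ[ZMod 2] (Fin m → ZMod 2) :=
  LinearMap.pi fun i => LinearMap.proj (railEdge (i.castLE hm))

theorem railEval_apply (hm : m ≤ k) (x : Sym2 (Fin (k + 1) × Bool) → ZMod 2) (i : Fin m) :
    railEval hm x i = x (railEdge (i.castLE hm)) := rfl

theorem railEval_edgeVec_ladderSquare (i : Fin k) :
    railEval le_rfl (edgeVec (ladderSquare i).toSubgraph) = Pi.single i 1 := by
  ext j
  simp [railEval_apply, edgeVec, railEdge_mem_edges_ladderSquare, Pi.single_apply]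

theorem le_card_of_span_eq_cycleSpace {B : Finset (ladder (k + 1)).Subgraph}
    (hB : Submodule.span (ZMod 2) (edgeVec '' (B : Set (ladder (k + 1)).Subgraph)) =
      cycleSpace (ladder (k + 1))) : k ≤ #B := by
  classical
  have hli : LinearIndependent (ZMod 2) fun i : Fin k => edgeVec (ladderSquare i).toSubgraph := by
    refine LinearIndependent.of_comp (railEval le_rfl) ?_
    convert (Pi.basisFun (ZMod 2) (Fin k)).linearIndependent using 1
    ext i : 1
    simp [railEval_edgeVec_ladderSquare]
  have hspan : Set.range (fun i : Fin k => edgeVec (ladderSquare i).toSubgraph) ≤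
      Submodule.span (ZMod 2) (B.image edgeVec : Set (Sym2 (Fin (k + 1) × Bool) → ZMod 2)) := by
    rintro _ ⟨i, rfl⟩
    rw [coe_image, hB]
    exact Submodule.subset_span ⟨_, (ladderSquare_isCycle i).isCycleSubgraph_toSubgraph_s15, rfl⟩
  have := linearIndependent_le_span_aux' _ hli _ hspan
  simp only [Fintype.card_fin, coe_sort_coe, Fintype.card_coe] at this
  exact this.trans card_image_le

open Classical in
theorem card_filter_le_of_linearIndependent {B : Finset (ladder (k + 1)).Subgraph}
    (hcyc : ∀ C ∈ B, IsCycleSubgraph C)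
    (hli : LinearIndependent (ZMod 2) fun C : (B : Set (ladder (k + 1)).Subgraph) => edgeVec C.1)
    (hm : m ≤ k) : #{C ∈ B | ∀ v ∈ C.verts, (v.1 : ℕ) ≤ m} ≤ m := by
  set B' := {C ∈ B | ∀ v ∈ C.verts, (v.1 : ℕ) ≤ m}
  let E : Set (Sym2 (Fin (k + 1) × Bool)) :=
    {e | e ∈ (ladder (k + 1)).edgeSet ∧ ∀ v ∈ e, (v.1 : ℕ) ≤ m}
  have hmem : ∀ C ∈ B', edgeVec C ∈ evenSpace E := fun C hC =>
    edgeVec_mem_evenSpace (hcyc C (mem_filter.1 hC).1) fun _ he =>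
      ⟨C.edgeSet_subset he, fun _ hv => (mem_filter.1 hC).2 _ (C.mem_verts_of_mem_edge he hv)⟩
  have hdisj : Disjoint (evenSpace E) (LinearMap.ker (railEval hm)) := by
    rw [Submodule.disjoint_def]
    intro x hx hker
    refine eq_zero_of_railEdge_eq_zero (evenSpace_mono (fun _ he => he.1) hx) fun i => ?_
    by_cases hi : (i : ℕ) < m
    · exact congrFun hker ⟨i, hi⟩
    · refine hx.1 _ fun he => hi ?_
      have := he.2 (i.succ, false) (Sym2.mem_mk_right _ _)
      simp only [Fin.val_succ] at this
      omega
  have hli' : LinearIndependent (ZMod 2) fun C : (B' : Set (ladder (k + 1)).Subgraph) =>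
      edgeVec C.1 :=
    hli.comp (Set.inclusion (coe_subset.2 (filter_subset _ _))) (Set.inclusion_injective _)
  have hspan : Submodule.span (ZMod 2) (Set.range fun C : (B' : Set _) => edgeVec C.1) ≤
      evenSpace E :=
    Submodule.span_le.2 (Set.range_subset_iff.2 fun C => hmem C.1 C.2)
  simpa using (hli'.map (hdisj.mono_left hspan)).fintype_card_le_finrank

end Rail

/-- Every cycle basis of the ladder graph rooted at its end rung
has total length `Ω(n²)`: there is a constant `c > 0` such that, for all
sufficiently large ladders, the sum of the lengths of the cycles of any rooted
cycle basis is at least `c` times the square of the number of vertices. -/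
theorem stmt15 :
    ∃ c : ℝ, 0 < c ∧ ∃ N : ℕ, ∀ k : ℕ, N ≤ k →
      ∀ B : Finset ((ladder (k + 1)).Subgraph),
        IsCycleBasis (↑B : Set ((ladder (k + 1)).Subgraph)) →
        (∀ C ∈ B, s(((0 : Fin (k + 1)), false), ((0 : Fin (k + 1)), true)) ∈
          C.edgeSet) →
        c * ((2 * (k + 1) : ℕ) ^ 2 : ℝ) ≤ ∑ C ∈ B, ((C.edgeSet.ncard : ℝ)) := by
  refine ⟨1 / 32, by norm_num, 1, fun k hk B ⟨hcyc, hli, hspan⟩ hroot => ?_⟩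
  have hlen : ∀ C ∈ B, ∀ v ∈ C.verts, (v.1 : ℕ) ≤ C.edgeSet.ncard := fun C hC v hv => by
    have hroot' := C.mem_verts_of_mem_edge (hroot C hC) (Sym2.mem_mk_left _ _)
    simpa using (hcyc C hC).2.1.sub_le_ncard_edgeSet (fun p => (p.1 : ℕ))
      (fun _ _ => ladder_adj_val_le) hroot' hv
  have hsum : ∑ m ∈ range (k + 1), m ≤ ∑ C ∈ B, C.edgeSet.ncard := by
    classical
    refine sum_range_le_sum_of_card_filter_le B _ (le_card_of_span_eq_cycleSpace hspan)
      fun m hm => (card_le_card fun C hC => ?_).trans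
        (card_filter_le_of_linearIndependent hcyc hli hm.le)
    rw [mem_filter] at hC ⊢
    exact ⟨hC.1, fun v hv => (hlen C hC.1 v hv).trans hC.2⟩
  have hnat : (k + 1) * k ≤ 2 * ∑ C ∈ B, C.edgeSet.ncard := by
    have := sum_range_id_mul_two (k + 1)
    rw [add_tsub_cancel_right] at this
    linarith
  have hreal : ((k : ℝ) + 1) * k ≤ 2 * ∑ C ∈ B, (C.edgeSet.ncard : ℝ) := by exact_mod_cast hnat
  have hk' : (1 : ℝ) ≤ k := by exact_mod_cast hk
  push_cast
  nlinarith
end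

section
/- A graph G has an open ear decomposition starting from any specified edge if and only if G is 2-vertex-connected (Whitney's theorem). -/
open SimpleGraph

section AuxWhitney

variable {V : Type*} {G : SimpleGraph V}

variable {V : Type*} {G : SimpleGraph V}

lemma reachable_induce_of_walk {A : Set V} {u w : V} (p : G.Walk u w)
    (hs : ∀ x ∈ p.support, x ∈ A) (hu : u ∈ A) (hw : w ∈ A) :
    (G.induce A).Reachable ⟨u, hu⟩ ⟨w, hw⟩ :=
  match w, hw, p with
  | _, _, .nil => Reachable.refl _
  | _, hw, .cons (v := x) h q => by
    have hx : x ∈ A := hs x (by simp)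
    have h2 : (G.induce A).Adj ⟨u, hu⟩ ⟨x, hx⟩ := by simpa using h
    exact h2.reachable.trans
      (reachable_induce_of_walk q (fun y hy => hs y (by simp [hy])) hx hw)

lemma exists_walk_of_induce {A : Set V} {u w : A} (p : (G.induce A).Walk u w) :
    ∃ q : G.Walk u w, ∀ x ∈ q.support, x ∈ A :=
  match w, p with
  | _, .nil => ⟨Walk.nil, by simp⟩
  | _, .cons (v := x) h q => by
    obtain ⟨q', hq'⟩ := exists_walk_of_induce q
    have h' : G.Adj u x := by simpa using h
    refine ⟨Walk.cons h' q', ?_⟩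
    intro y hy
    rcases List.mem_cons.mp (by simpa using hy) with rfl | hy'
    · exact u.2
    · exact hq' y hy'

lemma exists_walk_to_set {S : Set V} {u w : V} (p : G.Walk u w) (hw : w ∈ S) :
    ∃ (s' : V) (_ : s' ∈ S) (q : G.Walk u s'),
      (∀ x ∈ q.support, x ∈ p.support) ∧ (∀ x ∈ q.support, x ≠ s' → x ∉ S) :=
  match w, hw, p with
  | _, hw, .nil => ⟨u, hw, Walk.nil, by simp, by simp⟩
  | _, hw, .cons (v := y) h q => by
    by_cases hu : u ∈ S
    · exact ⟨u, hu, Walk.nil, by simp, by simp⟩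
    · obtain ⟨s', hs', q', hsub, hout⟩ := exists_walk_to_set q hw
      refine ⟨s', hs', Walk.cons h q', ?_, ?_⟩
      · intro x hx
        rcases List.mem_cons.mp (by simpa using hx) with rfl | hx'
        · simp
        · simp [hsub x hx']
      · intro x hx hxs
        rcases List.mem_cons.mp (by simpa using hx) with rfl | hx'
        · exact hu
        · exact hout x hx' hxs

lemma walk_length_one {u v : V} (p : G.Walk u v) (h : p.length = 1) :
    G.Adj u v ∧ p.support = [u, v] := by
  cases p with
  | nil => simp at h
  | cons h' q =>
    cases q with
    | nil => exact ⟨h', by simp⟩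
    | cons h'' q' => simp [Walk.length_cons] at h

variable {V : Type*} {G : SimpleGraph V}

lemma exists_third (hV : 3 ≤ Nat.card V) (a b : V) : ∃ c : V, c ≠ a ∧ c ≠ b := by
  have hfin : Finite V := Nat.finite_of_card_ne_zero (by omega)
  by_contra hc
  push_neg at hc
  have : (Set.univ : Set V) ⊆ {a, b} := by
    intro x _
    rcases Classical.em (x = a) with rfl | hx
    · simp
    · simp [hc x hx]
  have h1 : Nat.card V ≤ ({a, b} : Set V).ncard := by
    rw [← Set.ncard_univ]
    exact Set.ncard_le_ncard this (Set.toFinite _)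
  have h2 : ({a, b} : Set V).ncard ≤ 2 :=
    le_trans (Set.ncard_insert_le _ _) (by simp)
  omega

lemma twoConnected_connected (h : TwoConnected G) : G.Connected := by
  obtain ⟨hV, hdel⟩ := h
  have hne : Nonempty V := by
    rcases Nat.card_pos_iff.mp (by omega : 0 < Nat.card V) with ⟨h1, _⟩
    exact h1
  rw [connected_iff]
  refine ⟨?_, hne⟩
  intro a b
  rcases Classical.em (a = b) with rfl | hab
  · rfl
  obtain ⟨c, hca, hcb⟩ := exists_third hV a b
  have hc := hdel c
  have ha : a ∈ ({c}ᶜ : Set V) := by simp [Ne.symm hca]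
  have hb : b ∈ ({c}ᶜ : Set V) := by simp [Ne.symm hcb]
  obtain ⟨p⟩ := hc.preconnected ⟨a, ha⟩ ⟨b, hb⟩
  obtain ⟨q, -⟩ := exists_walk_of_induce p
  exact ⟨q⟩

lemma exists_adj (h : G.Connected) (hV : 3 ≤ Nat.card V) (v : V) : ∃ w, G.Adj v w := by
  obtain ⟨c, hcv, -⟩ := exists_third hV v v
  obtain ⟨p⟩ := h.preconnected v c
  cases p with
  | nil => exact absurd rfl (Ne.symm hcv)
  | cons h' q => exact ⟨_, h'⟩

lemma decomp_twoConnected {k : ℕ} {a b : Fin (k+1) → V} {W : ∀ i, G.Walk (a i) (b i)}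
    (hd : IsOpenEarDecomp G k a b W) (hV : 3 ≤ Nat.card V) : TwoConnected G := by
  classical
  obtain ⟨hpath, hlen, hear, _, _, hvcov⟩ := hd
  -- the set of vertices covered by the first `i+1` ears
  set S : ℕ → Set V := fun i => {x | ∃ j : Fin (k+1), j.1 ≤ i ∧ x ∈ (W j).support} with hS
  have hadj0 : G.Adj (a 0) (b 0) := (walk_length_one _ hlen).1
  have hsup0 : (W 0).support = [a 0, b 0] := (walk_length_one _ hlen).2
  have claim : ∀ i : ℕ, i ≤ k → ∀ (v p q : V) (hp : p ∈ S i) (hq : q ∈ S i)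
      (hpv : p ≠ v) (hqv : q ≠ v),
      (G.induce ({v}ᶜ : Set V)).Reachable ⟨p, by simp [hpv]⟩ ⟨q, by simp [hqv]⟩ := by
    intro i
    induction i with
    | zero =>
      intro _ v p q hp hq hpv hqv
      obtain ⟨j, hj, hpj⟩ := hp
      obtain ⟨j', hj', hqj⟩ := hq
      have hj0 : j = 0 := Fin.ext (by simp only [Fin.val_zero]; omega)
      have hj'0 : j' = 0 := Fin.ext (by simp only [Fin.val_zero]; omega)
      subst hj0; subst hj'0
      rw [hsup0] at hpj hqj
      simp only [List.mem_cons, List.mem_singleton, List.not_mem_nil, or_false] at hpj hqj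
      rcases Classical.em (p = q) with rfl | hpq
      · rfl
      · have : G.Adj p q := by
          rcases hpj with rfl | rfl <;> rcases hqj with rfl | rfl
          · exact absurd rfl hpq
          · exact hadj0
          · exact hadj0.symm
          · exact absurd rfl hpq
        have h2 : (G.induce ({v}ᶜ : Set V)).Adj ⟨p, by simp [hpv]⟩ ⟨q, by simp [hqv]⟩ := by
          simpa using this
        exact h2.reachable
    | succ i ih =>
      intro hik v p q hp hq hpv hqv
      have hik' : i ≤ k := by omega
      set I : Fin (k+1) := ⟨i+1, by omega⟩ with hI
      obtain ⟨hAB, ⟨jA, hjA, hjAmem⟩, ⟨jB, hjB, hjBmem⟩, -⟩ := hear I (by simp [hI])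
      have hAS : a I ∈ S i := ⟨jA, by
        have := hjA; simp only [Fin.lt_def, hI] at this; omega, hjAmem⟩
      have hBS : b I ∈ S i := ⟨jB, by
        have := hjB; simp only [Fin.lt_def, hI] at this; omega, hjBmem⟩
      -- escape lemma: from a vertex of ear `I` (≠ v) one can reach `S i` avoiding `v`
      have escape : ∀ (r : V) (hr : r ∈ (W I).support) (hrv : r ≠ v),
          ∃ (r' : V) (hr' : r' ∈ S i) (hr'v : r' ≠ v),
            (G.induce ({v}ᶜ : Set V)).Reachable ⟨r, by simp [hrv]⟩ ⟨r', by simp [hr'v]⟩ := by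
        intro r hr hrv
        set q1 := (W I).takeUntil r hr with hq1
        set q2 := (W I).dropUntil r hr with hq2
        have hspec : q1.append q2 = W I := (W I).take_spec hr
        have hnodup : ((W I).support).Nodup := (hpath I).support_nodup
        by_cases hv1 : v ∈ q1.support
        · -- go towards b I along q2
          have hv2 : v ∉ q2.support := by
            intro hv2
            have hvtail : v ∈ q2.support.tail := by
              have := (SimpleGraph.Walk.mem_support_iff q2).mp hv2
              rcases this with rfl | h
              · exact absurd rfl (Ne.symm hrv)
              · exact h
            have hsupp : (W I).support = q1.support ++ q2.support.tail := by
              rw [← hspec, SimpleGraph.Walk.support_append]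
            rw [hsupp] at hnodup
            exact (List.disjoint_of_nodup_append hnodup) hv1 hvtail
          have hBv : b I ≠ v := fun h => hv2 (h ▸ q2.end_mem_support)
          refine ⟨b I, hBS, hBv, ?_⟩
          exact reachable_induce_of_walk q2 (fun x hx => by
            simp only [Set.mem_compl_iff, Set.mem_singleton_iff]
            exact fun h => hv2 (h ▸ hx)) (by simp [hrv]) (by simp [hBv])
        · -- go back towards a I along q1.reverse
          have hAv : a I ≠ v := fun h => hv1 (h ▸ q1.start_mem_support)
          refine ⟨a I, hAS, hAv, ?_⟩
          exact reachable_induce_of_walk q1.reverse (fun x hx => by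
            simp only [Set.mem_compl_iff, Set.mem_singleton_iff]
            rw [SimpleGraph.Walk.support_reverse] at hx
            exact fun h => hv1 (h ▸ (List.mem_reverse.mp hx))) (by simp [hrv]) (by simp [hAv])
      -- now reduce both p and q to S i
      have reduce : ∀ (r : V) (hr : r ∈ S (i+1)) (hrv : r ≠ v),
          ∃ (r' : V) (hr' : r' ∈ S i) (hr'v : r' ≠ v),
            (G.induce ({v}ᶜ : Set V)).Reachable ⟨r, by simp [hrv]⟩ ⟨r', by simp [hr'v]⟩ := by
        intro r hr hrv
        obtain ⟨j, hj, hjr⟩ := hr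
        by_cases hji : j.1 ≤ i
        · exact ⟨r, ⟨j, hji, hjr⟩, hrv, Reachable.refl _⟩
        · have : j = I := Fin.ext (by simp [hI]; omega)
          subst this
          exact escape r hjr hrv
      obtain ⟨p', hp', hp'v, hpr⟩ := reduce p hp hpv
      obtain ⟨q', hq', hq'v, hqr⟩ := reduce q hq hqv
      exact hpr.trans ((ih hik' v p' q' hp' hq' hp'v hq'v).trans hqr.symm)
  refine ⟨hV, fun v => ?_⟩
  rw [connected_iff]
  constructor
  · rintro ⟨p, hp⟩ ⟨q, hq⟩
    have hpv : p ≠ v := by simpa using hp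
    have hqv : q ≠ v := by simpa using hq
    obtain ⟨ip, hip⟩ := hvcov p
    obtain ⟨iq, hiq⟩ := hvcov q
    have h := claim k le_rfl v p q ⟨ip, by omega, hip⟩ ⟨iq, by omega, hiq⟩ hpv hqv
    convert h using 2 <;> simp
  · obtain ⟨c, hc, -⟩ := exists_third hV v v
    exact ⟨⟨c, by simp [hc]⟩⟩

def PartialED {V : Type*} (G : SimpleGraph V) (k : ℕ) (a b : Fin (k+1) → V)
    (W : ∀ i, G.Walk (a i) (b i)) : Prop :=
  (∀ i, (W i).IsPath) ∧ (W 0).length = 1 ∧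
  (∀ i : Fin (k + 1), 0 < i.1 →
    a i ≠ b i ∧
    (∃ j, j < i ∧ a i ∈ (W j).support) ∧
    (∃ j, j < i ∧ b i ∈ (W j).support) ∧
    (∀ v ∈ (W i).support, v ≠ a i → v ≠ b i → ∀ j, j < i → v ∉ (W j).support)) ∧
  (∀ i j, i ≠ j → ∀ e ∈ (W i).edges, e ∉ (W j).edges)

lemma extendED {k : ℕ} {a b : Fin (k+1) → V} {W : ∀ i, G.Walk (a i) (b i)}
    (h : PartialED G k a b W) {A B : V} (E : G.Walk A B) (hE : E.IsPath) (hAB : A ≠ B)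
    (hA : ∃ j, A ∈ (W j).support) (hB : ∃ j, B ∈ (W j).support)
    (hInt : ∀ v ∈ E.support, v ≠ A → v ≠ B → ∀ j, v ∉ (W j).support)
    (hEdge : ∀ e ∈ E.edges, ∀ j, e ∉ (W j).edges) :
    ∃ (a' b' : Fin (k+2) → V) (W' : ∀ i, G.Walk (a' i) (b' i)),
      PartialED G (k+1) a' b' W' ∧ a' 0 = a 0 ∧ b' 0 = b 0 ∧
      (∀ e, (∃ i, e ∈ (W' i).edges) ↔ (∃ i, e ∈ (W i).edges) ∨ e ∈ E.edges) ∧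
      (∀ v, (∃ i, v ∈ (W' i).support) ↔ (∃ i, v ∈ (W i).support) ∨ v ∈ E.support) := by
  classical
  obtain ⟨hpath, hlen, hear, hdisj⟩ := h
  let a' : Fin (k+2) → V := fun i => if hi : i.1 < k+1 then a ⟨i.1, hi⟩ else A
  let b' : Fin (k+2) → V := fun i => if hi : i.1 < k+1 then b ⟨i.1, hi⟩ else B
  have ha1 : ∀ (i : Fin (k+2)) (hi : i.1 < k+1), a' i = a ⟨i.1, hi⟩ := fun i hi => dif_pos hi
  have hb1 : ∀ (i : Fin (k+2)) (hi : i.1 < k+1), b' i = b ⟨i.1, hi⟩ := fun i hi => dif_pos hi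
  have ha2 : ∀ (i : Fin (k+2)), ¬ i.1 < k+1 → a' i = A := fun i hi => dif_neg hi
  have hb2 : ∀ (i : Fin (k+2)), ¬ i.1 < k+1 → b' i = B := fun i hi => dif_neg hi
  let W' : ∀ i : Fin (k+2), G.Walk (a' i) (b' i) := fun i =>
    if hi : i.1 < k+1 then (W ⟨i.1, hi⟩).copy (ha1 i hi).symm (hb1 i hi).symm
    else E.copy (ha2 i hi).symm (hb2 i hi).symm
  have hW1 : ∀ (i : Fin (k+2)) (hi : i.1 < k+1),
      W' i = (W ⟨i.1, hi⟩).copy (ha1 i hi).symm (hb1 i hi).symm := fun i hi => dif_pos hi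
  have hW2 : ∀ (i : Fin (k+2)) (hi : ¬ i.1 < k+1),
      W' i = E.copy (ha2 i hi).symm (hb2 i hi).symm := fun i hi => dif_neg hi
  have hsup1 : ∀ (i : Fin (k+2)) (hi : i.1 < k+1), (W' i).support = (W ⟨i.1, hi⟩).support :=
    fun i hi => by rw [hW1 i hi]; exact SimpleGraph.Walk.support_copy _ _ _
  have hsup2 : ∀ (i : Fin (k+2)), ¬ i.1 < k+1 → (W' i).support = E.support :=
    fun i hi => by rw [hW2 i hi]; exact SimpleGraph.Walk.support_copy _ _ _
  have hedg1 : ∀ (i : Fin (k+2)) (hi : i.1 < k+1), (W' i).edges = (W ⟨i.1, hi⟩).edges :=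
    fun i hi => by rw [hW1 i hi]; exact SimpleGraph.Walk.edges_copy _ _ _
  have hedg2 : ∀ (i : Fin (k+2)), ¬ i.1 < k+1 → (W' i).edges = E.edges :=
    fun i hi => by rw [hW2 i hi]; exact SimpleGraph.Walk.edges_copy _ _ _
  have h0lt : ((0 : Fin (k+2)) : ℕ) < k+1 := by simp
  have h0eq : (⟨((0 : Fin (k+2)) : ℕ), h0lt⟩ : Fin (k+1)) = 0 := by ext; simp
  refine ⟨a', b', W', ⟨?_, ?_, ?_, ?_⟩, ?_, ?_, ?_, ?_⟩
  · -- paths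
    intro i
    by_cases hi : i.1 < k+1
    · rw [hW1 i hi]; rw [SimpleGraph.Walk.isPath_copy]; exact hpath _
    · rw [hW2 i hi]; rw [SimpleGraph.Walk.isPath_copy]; exact hE
  · -- length of first
    rw [hW1 0 h0lt]
    rw [SimpleGraph.Walk.length_copy, h0eq]
    exact hlen
  · -- ear conditions
    intro i hi0
    by_cases hi : i.1 < k+1
    · set i' : Fin (k+1) := ⟨i.1, hi⟩ with hi'
      obtain ⟨hab, ⟨jA, hjA, hjAm⟩, ⟨jB, hjB, hjBm⟩, hint⟩ := hear i' hi0
      refine ⟨by rw [ha1 i hi, hb1 i hi]; exact hab, ?_, ?_, ?_⟩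
      · refine ⟨⟨jA.1, by omega⟩, by simp [Fin.lt_def]; exact hjA, ?_⟩
        rw [hsup1 _ (by simpa using jA.2)]
        rw [ha1 i hi]
        convert hjAm using 2
      · refine ⟨⟨jB.1, by omega⟩, by simp [Fin.lt_def]; exact hjB, ?_⟩
        rw [hsup1 _ (by simpa using jB.2)]
        rw [hb1 i hi]
        convert hjBm using 2
      · intro v hv hva hvb j hj
        have hjlt : j.1 < k+1 := by
          have := hj; rw [Fin.lt_def] at this; omega
        rw [hsup1 j hjlt]
        rw [hsup1 i hi] at hv
        rw [ha1 i hi] at hva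
        rw [hb1 i hi] at hvb
        exact hint v hv hva hvb ⟨j.1, hjlt⟩ (by rw [Fin.lt_def]; exact hj)
    · refine ⟨by rw [ha2 i hi, hb2 i hi]; exact hAB, ?_, ?_, ?_⟩
      · obtain ⟨j, hjm⟩ := hA
        refine ⟨⟨j.1, by omega⟩, by rw [Fin.lt_def]; simp; omega, ?_⟩
        rw [hsup1 _ (by simpa using j.2), ha2 i hi]
        convert hjm using 2
      · obtain ⟨j, hjm⟩ := hB
        refine ⟨⟨j.1, by omega⟩, by rw [Fin.lt_def]; simp; omega, ?_⟩
        rw [hsup1 _ (by simpa using j.2), hb2 i hi]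
        convert hjm using 2
      · intro v hv hva hvb j hj
        have hjlt : j.1 < k+1 := by rw [Fin.lt_def] at hj; omega
        rw [hsup1 j hjlt]
        rw [hsup2 i hi] at hv
        rw [ha2 i hi] at hva
        rw [hb2 i hi] at hvb
        exact hInt v hv hva hvb _
  · -- edge disjointness
    intro i j hij e hei
    by_cases hi : i.1 < k+1 <;> by_cases hj : j.1 < k+1
    · rw [hedg1 j hj]
      rw [hedg1 i hi] at hei
      refine hdisj ⟨i.1, hi⟩ ⟨j.1, hj⟩ (fun hc => hij ?_) e hei
      simp only [Fin.mk.injEq] at hc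
      exact Fin.ext hc
    · rw [hedg2 j hj]
      rw [hedg1 i hi] at hei
      intro hc
      exact hEdge e hc ⟨i.1, hi⟩ hei
    · rw [hedg1 j hj]
      rw [hedg2 i hi] at hei
      exact hEdge e hei ⟨j.1, hj⟩
    · exact absurd (Fin.ext (by omega : i.1 = j.1)) hij
  · rw [ha1 0 h0lt, h0eq]
  · rw [hb1 0 h0lt, h0eq]
  · -- edges coverage
    intro e
    constructor
    · rintro ⟨i, hi⟩
      by_cases hlt : i.1 < k+1
      · rw [hedg1 i hlt] at hi; exact Or.inl ⟨_, hi⟩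
      · rw [hedg2 i hlt] at hi; exact Or.inr hi
    · rintro (⟨i, hi⟩ | hi)
      · refine ⟨⟨i.1, by omega⟩, ?_⟩
        rw [hedg1 _ (by simpa using i.2)]
        convert hi using 2
      · refine ⟨⟨k+1, by omega⟩, ?_⟩
        rw [hedg2 _ (by simp)]
        exact hi
  · -- support coverage
    intro v
    constructor
    · rintro ⟨i, hi⟩
      by_cases hlt : i.1 < k+1
      · rw [hsup1 i hlt] at hi; exact Or.inl ⟨_, hi⟩
      · rw [hsup2 i hlt] at hi; exact Or.inr hi
    · rintro (⟨i, hi⟩ | hi)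
      · refine ⟨⟨i.1, by omega⟩, ?_⟩
        rw [hsup1 _ (by simpa using i.2)]
        convert hi using 2
      · refine ⟨⟨k+1, by omega⟩, ?_⟩
        rw [hsup2 _ (by simp)]
        exact hi

lemma mem_support_of_edge {u w z : V} (p : G.Walk u w) {e : Sym2 V}
    (he : e ∈ p.edges) (hz : z ∈ e) : z ∈ p.support := by
  obtain ⟨y, rfl⟩ := Sym2.mem_iff_exists.mp hz
  exact p.fst_mem_support_of_mem_edges he

lemma exists_endpoint_notin {S : Set V} {u w : V} (p : G.Walk u w) (hp : p.IsPath)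
    (hout : ∀ x ∈ p.support, x ≠ w → x ∉ S) : ∀ e ∈ p.edges, ∃ z ∈ e, z ∉ S :=
  match w, p, hp, hout with
  | _, .nil, _, _ => by simp
  | _, .cons (v := x) h q, hp, hout => by
    intro e he
    rcases List.mem_cons.mp (by simpa using he) with rfl | he'
    · have huw : u ≠ _ := fun hc =>
        ((SimpleGraph.Walk.cons_isPath_iff h q).mp hp).2 (hc ▸ q.end_mem_support)
      exact ⟨u, Sym2.mem_iff.mpr (Or.inl rfl), hout u (by simp) huw⟩
    · exact exists_endpoint_notin q (((SimpleGraph.Walk.cons_isPath_iff h q).mp hp).1)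
        (fun z hz hzw => hout z (by simp [hz]) hzw) e he'

lemma buildED (hV : 3 ≤ Nat.card V) (h2 : TwoConnected G) :
    ∀ (n k : ℕ) (a b : Fin (k+1) → V) (W : ∀ i, G.Walk (a i) (b i)),
      PartialED G k a b W →
      (G.edgeSet \ {e | ∃ i, e ∈ (W i).edges}).ncard ≤ n →
      ∃ (k' : ℕ) (a' b' : Fin (k'+1) → V) (W' : ∀ i, G.Walk (a' i) (b' i)),
        IsOpenEarDecomp G k' a' b' W' ∧ a' 0 = a 0 ∧ b' 0 = b 0 := by
  classical
  have hfinV : Finite V := Nat.finite_of_card_ne_zero (by omega)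
  have hconn := twoConnected_connected h2
  -- if everything is covered, we are done
  have finish : ∀ (k : ℕ) (a b : Fin (k+1) → V) (W : ∀ i, G.Walk (a i) (b i)),
      PartialED G k a b W → (G.edgeSet \ {e | ∃ i, e ∈ (W i).edges}) = ∅ →
      IsOpenEarDecomp G k a b W := by
    intro k a b W hP hemp
    obtain ⟨h1, h2', h3, h4⟩ := hP
    refine ⟨h1, h2', h3, h4, ?_, ?_⟩
    · intro e
      constructor
      · intro he
        by_contra hc
        exact Set.eq_empty_iff_forall_notMem.mp hemp e ⟨he, hc⟩
      · rintro ⟨i, hi⟩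
        exact (W i).edges_subset_edgeSet hi
    · intro v
      obtain ⟨w, hw⟩ := exists_adj hconn hV v
      have : s(v, w) ∈ G.edgeSet := hw
      have hcov : ∃ i, s(v, w) ∈ (W i).edges := by
        by_contra hc
        exact Set.eq_empty_iff_forall_notMem.mp hemp _ ⟨this, hc⟩
      obtain ⟨i, hi⟩ := hcov
      exact ⟨i, (W i).fst_mem_support_of_mem_edges hi⟩
  intro n
  induction n with
  | zero =>
    intro k a b W hP hcard
    have hemp : (G.edgeSet \ {e | ∃ i, e ∈ (W i).edges}) = ∅ := by
      rw [← Set.ncard_eq_zero (Set.toFinite _)]; omega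
    exact ⟨k, a, b, W, finish k a b W hP hemp, rfl, rfl⟩
  | succ n ih =>
    intro k a b W hP hcard
    by_cases hemp : (G.edgeSet \ {e | ∃ i, e ∈ (W i).edges}) = ∅
    · exact ⟨k, a, b, W, finish k a b W hP hemp, rfl, rfl⟩
    · -- there is an uncovered edge
      obtain ⟨e0, he0⟩ := Set.nonempty_iff_ne_empty.mpr hemp
      obtain ⟨he0G, he0n⟩ := he0
      set S : Set V := {x | ∃ i, x ∈ (W i).support} with hSdef
      -- covered edges have both endpoints in S
      have hcovS : ∀ (e : Sym2 V), (∃ j, e ∈ (W j).edges) → ∀ z ∈ e, z ∈ S := by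
        rintro e ⟨j, hj⟩ z hz
        exact ⟨j, mem_support_of_edge (W j) hj hz⟩
      -- a new ear: in both cases we produce an ear E whose first edge is uncovered
      have key : ∃ (A B : V) (E : G.Walk A B) (_ : E.IsPath) (_ : A ≠ B)
          (_ : ∃ j, A ∈ (W j).support) (_ : ∃ j, B ∈ (W j).support)
          (_ : ∀ v ∈ E.support, v ≠ A → v ≠ B → ∀ j, v ∉ (W j).support)
          (_ : ∀ e ∈ E.edges, ∀ j, e ∉ (W j).edges)
          (e1 : Sym2 V), e1 ∈ E.edges ∧ e1 ∈ G.edgeSet ∧ ¬∃ i, e1 ∈ (W i).edges := by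
        by_cases hall : ∀ x, x ∈ S
        · -- every vertex covered: a single uncovered edge is an ear
          revert he0G he0n
          induction e0 using Sym2.ind with
          | _ p q =>
            intro he0G he0n
            have hpq : G.Adj p q := he0G
            refine ⟨p, q, SimpleGraph.Walk.cons hpq SimpleGraph.Walk.nil, ?_, hpq.ne, hall p,
              hall q, ?_, ?_, s(p, q), by simp, he0G, he0n⟩
            · rw [SimpleGraph.Walk.cons_isPath_iff]
              exact ⟨SimpleGraph.Walk.IsPath.nil, by simp [hpq.ne]⟩
            · intro v hv hva hvb
              simp only [SimpleGraph.Walk.support_cons, SimpleGraph.Walk.support_nil,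
                List.mem_cons, List.mem_singleton] at hv
              rcases hv with rfl | hv
              · exact absurd rfl hva
              · rcases hv with rfl | hv
                · exact absurd rfl hvb
                · simp at hv
            · intro e he j hc
              have : e = s(p, q) := by simpa using he
              exact he0n ⟨j, this ▸ hc⟩
        · -- there is an uncovered vertex: grow a proper ear
          push_neg at hall
          obtain ⟨t0, ht0⟩ := hall
          have hA0S : a 0 ∈ S := ⟨0, (W 0).start_mem_support⟩
          obtain ⟨pw⟩ := hconn.preconnected (a 0) t0
          obtain ⟨d, _, hdf, hds⟩ := pw.exists_boundary_dart S hA0S ht0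
          set s := d.fst with hsdef
          set t := d.snd with htdef
          have hst : G.Adj s t := d.adj
          have hab0 : a 0 ≠ b 0 := (walk_length_one (W 0) hP.2.1).1.ne
          obtain ⟨w, hwS, hws⟩ : ∃ w, w ∈ S ∧ w ≠ s := by
            by_cases h0 : a 0 = s
            · exact ⟨b 0, ⟨0, (W 0).end_mem_support⟩, fun hc => hab0 (h0 ▸ hc ▸ rfl)⟩
            · exact ⟨a 0, hA0S, h0⟩
          have hts : t ≠ s := fun h => hds (h ▸ hdf)
          obtain ⟨piw⟩ := (h2.2 s).preconnected ⟨t, by simp [hts]⟩ ⟨w, by simp [hws]⟩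
          obtain ⟨q, hqA⟩ := exists_walk_of_induce piw
          obtain ⟨s', hs'S, q', hq'sub, hq'out⟩ := exists_walk_to_set q hwS
          set q'' := q'.bypass with hq''def
          have hq''path : q''.IsPath := SimpleGraph.Walk.bypass_isPath q'
          have hq''sub : q''.support ⊆ q'.support := SimpleGraph.Walk.support_bypass_subset q'
          have hq''s : ∀ x ∈ q''.support, x ≠ s := by
            intro x hx
            have := hqA x (hq'sub x (hq''sub hx))
            simpa using this
          have hq''out : ∀ x ∈ q''.support, x ≠ s' → x ∉ S :=
            fun x hx => hq'out x (hq''sub hx)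
          have hss' : s ≠ s' := fun hc => hq''s s' q''.end_mem_support hc.symm
          refine ⟨s, s', SimpleGraph.Walk.cons hst q'', ?_, hss', hdf, hs'S, ?_, ?_,
            s(s, t), by simp, hst, ?_⟩
          · rw [SimpleGraph.Walk.cons_isPath_iff]
            exact ⟨hq''path, fun hc => hq''s s hc rfl⟩
          · intro v hv hva hvb j hj
            simp only [SimpleGraph.Walk.support_cons, List.mem_cons] at hv
            rcases hv with rfl | hv
            · exact absurd rfl hva
            · exact (hq''out v hv hvb) ⟨j, hj⟩
          · -- edge disjointness from old ears
            intro e he j hc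
            simp only [SimpleGraph.Walk.edges_cons, List.mem_cons] at he
            rcases he with rfl | he
            · exact hds (hcovS _ ⟨j, hc⟩ t (Sym2.mem_iff.mpr (Or.inr rfl)))
            · obtain ⟨z, hze, hzS⟩ := exists_endpoint_notin q'' hq''path hq''out e he
              exact hzS (hcovS _ ⟨j, hc⟩ z hze)
          · -- s(s,t) is uncovered
            rintro ⟨j, hj⟩
            exact hds (hcovS _ ⟨j, hj⟩ t (Sym2.mem_iff.mpr (Or.inr rfl)))
      obtain ⟨A, B, E, hE, hAB, hA, hB, hInt, hEdge, e1, he1E, he1G, he1n⟩ := key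
      obtain ⟨a', b', W', hP', ha0, hb0, hecov, hscov⟩ :=
        extendED ⟨hP.1, hP.2.1, hP.2.2.1, hP.2.2.2⟩ E hE hAB hA hB hInt hEdge
      have hsub : (G.edgeSet \ {e | ∃ i, e ∈ (W' i).edges}) ⊆
          (G.edgeSet \ {e | ∃ i, e ∈ (W i).edges}) \ {e1} := by
        rintro e ⟨heG, hen⟩
        rw [Set.mem_diff]
        refine ⟨⟨heG, fun hc => hen ((hecov e).mpr (Or.inl hc))⟩, fun hc => ?_⟩
        rw [Set.mem_singleton_iff] at hc
        subst hc
        exact hen ((hecov e).mpr (Or.inr he1E))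
      have hlt : ((G.edgeSet \ {e | ∃ i, e ∈ (W i).edges}) \ {e1}).ncard <
          (G.edgeSet \ {e | ∃ i, e ∈ (W i).edges}).ncard :=
        Set.ncard_diff_singleton_lt_of_mem ⟨he1G, he1n⟩ (Set.toFinite _)
      have hle : (G.edgeSet \ {e | ∃ i, e ∈ (W' i).edges}).ncard ≤ n := by
        have := Set.ncard_le_ncard hsub (Set.toFinite _)
        omega
      obtain ⟨k', a'', b'', W'', hdec, ha0', hb0'⟩ := ih (k+1) a' b' W' hP' hle
      exact ⟨k', a'', b'', W'', hdec, ha0'.trans ha0, hb0'.trans hb0⟩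

end AuxWhitney

/-- Whitney. A graph on at least three vertices is
2-vertex-connected if and only if it has an open ear decomposition starting from
any specified edge. -/
theorem stmt17 {V : Type*} (G : SimpleGraph V) (hV : 3 ≤ Nat.card V)
    (x y : V) (hxy : G.Adj x y) :
    TwoConnected G ↔
      ∀ u v : V, G.Adj u v →
        ∃ (k : ℕ) (a b : Fin (k + 1) → V) (W : ∀ i, G.Walk (a i) (b i)),
          IsOpenEarDecomp G k a b W ∧ a 0 = u ∧ b 0 = v := by
  constructor
  · intro h2 u v huv
    have hfinV : Finite V := Nat.finite_of_card_ne_zero (by omega)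
    have hP : PartialED G 0 (fun _ => u) (fun _ => v)
        (fun _ => SimpleGraph.Walk.cons huv SimpleGraph.Walk.nil) := by
      refine ⟨?_, by simp, ?_, ?_⟩
      · intro i
        rw [SimpleGraph.Walk.cons_isPath_iff]
        exact ⟨SimpleGraph.Walk.IsPath.nil, by simp [huv.ne]⟩
      · intro i hi
        have := i.isLt
        omega
      · intro i j hij
        have hi := i.isLt
        have hj := j.isLt
        exact absurd (Fin.ext (by omega : i.1 = j.1)) hij
    obtain ⟨k', a', b', W', hdec, ha, hb⟩ :=
      buildED hV h2 (G.edgeSet.ncard) 0 _ _ _ hP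
        (Set.ncard_le_ncard Set.diff_subset (Set.toFinite _))
    exact ⟨k', a', b', W', hdec, ha, hb⟩
  · intro h
    obtain ⟨k, a, b, W, hdec, -, -⟩ := h x y hxy
    exact decomp_twoConnected hdec hV
end
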